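/- arXiv:2203.05783 — 7 statements merged into one kernel-verified Lean document; each statement's English description precedes it below -/
import Mathlib

section
/- Let K be a field of characteristic zero, let s ≥ 1 and r_1,…,r_s ≥ 1 be integers, and let R = K[x, y_{1,1},…,y_{1,r_1},…,y_{s,1},…,y_{s,r_s}]. Let D = ∂_x + Σ_{i=1}^{s} Σ_{j=1}^{r_i} (a_i(x)·y_{i,j} + b_{i,j}(x))·∂_{i,j} be the K-derivation of R determined by D(x) = 1 and D(y_{i,j}) = a_i(x)·y_{i,j} + b_{i,j}(x), where a_i, b_{i,j} ∈ K[x]. If D is a simple derivation, then deg a_i ≥ 1 (i.e., a_i is not a constant polynomial) for all 1 ≤ i ≤ s. -/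
/-!
If `aᵢ = c` is constant, choose `p ∈ K[x]` with `p' - c p = bᵢ₁` (possible in characteristic
zero: for `c = 0` take an antiderivative, otherwise invert `d/dx - c` by a terminating geometric
series). Then `f = yᵢ₁ - p(x)` satisfies `D f = c f`, so `(f)` is a `D`-stable ideal, and it is
neither `0` nor `R`.
-/

open MvPolynomial

/-- A `K`-subspace `M` of `R` is a Mathieu–Zhao space if for all `a, b ∈ R` such that
`a ^ m ∈ M` for all `m ≥ 1`, there exists `N` such that `b * a ^ m ∈ M` for all `m ≥ N`. -/
def IsMathieuZhao (K : Type*) {R : Type*} [Field K] [CommRing R] [Algebra K R]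
    (M : Submodule K R) : Prop :=
  ∀ a b : R, (∀ m : ℕ, 1 ≤ m → a ^ m ∈ M) →
    ∃ N : ℕ, ∀ m : ℕ, N ≤ m → b * a ^ m ∈ M

/-- A `K`-derivation `D` of `R` is simple if the only ideals `I` of `R` with `D(I) ⊆ I`
are `0` and `R`. -/
def Derivation.IsSimple {K R : Type*} [CommRing K] [CommRing R] [Algebra K R]
    (D : Derivation K R R) : Prop :=
  ∀ I : Ideal R, (∀ a ∈ I, D a ∈ I) → I = ⊥ ∨ I = ⊤

namespace Polynomial

theorem exists_derivative_eq {K : Type*} [Field K] [CharZero K] (b : K[X]) :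
    ∃ p : K[X], derivative p = b := by
  refine ⟨∑ n ∈ Finset.range (b.natDegree + 1), C (b.coeff n / (n + 1)) * X ^ (n + 1), ?_⟩
  conv_rhs => rw [b.as_sum_range_C_mul_X_pow]
  rw [derivative_sum]
  refine Finset.sum_congr rfl fun n _ => ?_
  rw [derivative_C_mul_X_pow, Nat.add_sub_cancel, Nat.cast_add_one,
    div_mul_cancel₀ _ (Nat.cast_add_one_ne_zero n)]

/-- The solution is `p = -∑ₖ c⁻ᵏ⁻¹ b⁽ᵏ⁾`, a finite sum since `b⁽ᵏ⁾ = 0` for `k > deg b`. -/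
theorem exists_derivative_sub_C_mul_eq_of_ne_zero {K : Type*} [Field K] {c : K} (hc : c ≠ 0)
    (b : K[X]) : ∃ p : K[X], derivative p - C c * p = b := by
  set f : ℕ → K[X] := fun k => C (c⁻¹ ^ k) * derivative^[k] b
  refine ⟨-∑ k ∈ Finset.range (b.natDegree + 1), C c⁻¹ * f k, ?_⟩
  have hf : ∀ k, C c * (C c⁻¹ * f k) - derivative (C c⁻¹ * f k) = f k - f (k + 1) := by
    intro k
    simp only [f, derivative_C_mul, ← mul_assoc, ← C_mul, Function.iterate_succ_apply',
      mul_inv_cancel₀ hc, one_mul, pow_succ']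
  rw [derivative_neg, derivative_sum, mul_neg, Finset.mul_sum, neg_sub_neg,
    ← Finset.sum_sub_distrib]
  simp only [hf]
  rw [Finset.sum_range_sub']
  simp [f, iterate_derivative_eq_zero (Nat.lt_succ_self _)]

theorem exists_derivative_sub_C_mul_eq {K : Type*} [Field K] [CharZero K] (c : K) (b : K[X]) :
    ∃ p : K[X], derivative p - C c * p = b := by
  rcases eq_or_ne c 0 with rfl | hc
  · simpa using exists_derivative_eq b
  · exact exists_derivative_sub_C_mul_eq_of_ne_zero hc b

end Polynomial

theorem Derivation.IsSimple.isUnit_of_dvd_apply {K R : Type*} [CommRing K] [CommRing R]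
    [Algebra K R] {D : Derivation K R R} (hD : D.IsSimple) {f : R} (hf : f ≠ 0)
    (hdvd : f ∣ D f) : IsUnit f := by
  have hstable : ∀ g ∈ Ideal.span {f}, D g ∈ Ideal.span {f} := by
    simp only [Ideal.mem_span_singleton]
    rintro _ ⟨h, rfl⟩
    rw [Derivation.leibniz, smul_eq_mul, smul_eq_mul]
    exact dvd_add (dvd_mul_right f _) (hdvd.mul_left h)
  rcases hD _ hstable with hbot | htop
  · exact absurd (Ideal.span_singleton_eq_bot.mp hbot) hf
  · exact Ideal.span_singleton_eq_top.mp htop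

namespace MvPolynomial

variable {σ R : Type*} [CommRing R] {u v : σ}

theorem aeval_single_X_sub_aeval_X [DecidableEq σ] (huv : u ≠ v) (q : Polynomial R) :
    aeval (Pi.single u Polynomial.X) (X u - Polynomial.aeval (X v) q : MvPolynomial σ R) =
      Polynomial.X - Polynomial.C (q.coeff 0) := by
  rw [map_sub, aeval_X, ← Polynomial.aeval_algHom_apply, aeval_X, Pi.single_eq_same,
    Pi.single_eq_of_ne huv.symm, ← Polynomial.coeff_zero_eq_aeval_zero',
    Polynomial.algebraMap_eq]

theorem X_sub_aeval_X_ne_zero [Nontrivial R] (huv : u ≠ v) (q : Polynomial R) :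
    (X u - Polynomial.aeval (X v) q : MvPolynomial σ R) ≠ 0 := by
  classical
  intro h
  apply Polynomial.X_sub_C_ne_zero (q.coeff 0)
  rw [← aeval_single_X_sub_aeval_X huv, h, map_zero]

theorem not_isUnit_X_sub_aeval_X [Nontrivial R] (huv : u ≠ v) (q : Polynomial R) :
    ¬IsUnit (X u - Polynomial.aeval (X v) q : MvPolynomial σ R) := by
  classical
  intro h
  apply Polynomial.not_isUnit_X_sub_C (q.coeff 0)
  rw [← aeval_single_X_sub_aeval_X huv]
  exact h.map _

end MvPolynomial

theorem statement0_general (K : Type*) [Field K] [CharZero K]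
    (s : ℕ) (r : Fin s → ℕ) (hr : ∀ i, 1 ≤ r i)
    (a : Fin s → Polynomial K) (b : (i : Fin s) → Fin (r i) → Polynomial K)
    (D : Derivation K (MvPolynomial (Option (Σ i : Fin s, Fin (r i))) K)
      (MvPolynomial (Option (Σ i : Fin s, Fin (r i))) K))
    (hDx : D (X none) = 1)
    (hDy : ∀ (i : Fin s) (j : Fin (r i)),
      D (X (some ⟨i, j⟩)) =
        Polynomial.aeval (X none) (a i) * X (some ⟨i, j⟩)
          + Polynomial.aeval (X none) (b i j))
    (hD : Derivation.IsSimple D) :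
    ∀ i : Fin s, 1 ≤ (a i).natDegree := by
  intro i
  by_contra hlt
  obtain ⟨c, hc⟩ : ∃ c, a i = Polynomial.C c :=
    ⟨_, Polynomial.eq_C_of_natDegree_eq_zero (by omega)⟩
  let j : Fin (r i) := ⟨0, hr i⟩
  obtain ⟨p, hp⟩ := Polynomial.exists_derivative_sub_C_mul_eq c (b i j)
  have hy : (some ⟨i, j⟩ : Option (Σ i : Fin s, Fin (r i))) ≠ none := Option.some_ne_none _
  have hDf : D (X (some ⟨i, j⟩) - Polynomial.aeval (X none) p) =
      C c * (X (some ⟨i, j⟩) - Polynomial.aeval (X none) p) := by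
    rw [map_sub, hDy, Derivation.comp_aeval_eq, hDx, ← hp, hc]
    simp only [map_sub, map_mul, Polynomial.aeval_C, algebraMap_eq, smul_eq_mul, mul_one]
    ring
  exact not_isUnit_X_sub_aeval_X hy p
    (hD.isUnit_of_dvd_apply (X_sub_aeval_X_ne_zero hy p) (Dvd.intro_left _ hDf.symm))

/-- If the Shamsuddin derivation `D = ∂ₓ + Σᵢⱼ (aᵢ(x) yᵢⱼ + bᵢⱼ(x)) ∂ᵢⱼ`
is simple, then `deg aᵢ ≥ 1` for all `i`. -/
theorem statement0 (K : Type*) [Field K] [CharZero K]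
    (s : ℕ) (hs : 1 ≤ s) (r : Fin s → ℕ) (hr : ∀ i, 1 ≤ r i)
    (a : Fin s → Polynomial K) (b : (i : Fin s) → Fin (r i) → Polynomial K)
    (D : Derivation K (MvPolynomial (Option (Σ i : Fin s, Fin (r i))) K)
      (MvPolynomial (Option (Σ i : Fin s, Fin (r i))) K))
    (hDx : D (X none) = 1)
    (hDy : ∀ (i : Fin s) (j : Fin (r i)),
      D (X (some ⟨i, j⟩)) =
        Polynomial.aeval (X none) (a i) * X (some ⟨i, j⟩)
          + Polynomial.aeval (X none) (b i j))
    (hD : Derivation.IsSimple D) :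
    ∀ i : Fin s, 1 ≤ (a i).natDegree :=
  statement0_general K s r hr a b D hDx hDy hD
end

section
/- Let K be a field of characteristic zero, let s ≥ 1 and r_1,…,r_s ≥ 1 be integers, and let R = K[x, y_{1,1},…,y_{1,r_1},…,y_{s,1},…,y_{s,r_s}]. Let D = ∂_x + Σ_{i=1}^{s} Σ_{j=1}^{r_i} (a_i(x)·y_{i,j} + b_{i,j}(x))·∂_{i,j} be the K-derivation of R with a_i, b_{i,j} ∈ K[x] and a_i ≠ a_l for i ≠ l. If for every i ∈ {1,…,s} and every j ∈ {1,…,r_i} one has deg a_i > deg b_{i,j}, and for every i the polynomials b_{i,1},…,b_{i,r_i} are linearly independent over K, then Im D = D(R) is not a Mathieu–Zhao space of R. -/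
open MvPolynomial

/-!
Since `D x = 1`, the image of `D` contains `1`, and a Mathieu–Zhao space containing `1` is the
whole ring; so it suffices to find a functional `Θ` vanishing on `Im D` with `Θ y_{t₀} = 1`.
With `P_β = Σ_t β_t a_t`, one has `D (c y^β) = (c' + P_β c) y^β + Σ_t β_t b_t c y^(β - e_t)` for
`c ∈ K[x]`, so `Θ (c y^β) = θ_β c` kills `Im D` when
`θ_β (c' + P_β c) = - Σ_t β_t θ_{β - e_t} (b_t c)` for all `β`.
The `θ_β` are built by induction on `|β|`. If `P_β ≠ 0`, the map `c ↦ c' + P_β c` is injective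
and its image meets the polynomials of degree `< deg P_β` only in `0`, so `θ_β` can moreover be
prescribed on the linearly independent `b_u` with `a_u = -P_β`. If `P_β = 0`, the map is the
derivative, and the equation is solvable iff `Σ_t β_t θ_{β - e_t} (b_t) = 0`, which the
prescribed values guarantee.
-/

theorem IsMathieuZhao.eq_top_of_one_mem {K R : Type*} [Field K] [CommRing R] [Algebra K R]
    {M : Submodule K R} (hM : IsMathieuZhao K M) (h1 : (1 : R) ∈ M) : M = ⊤ :=
  eq_top_iff.2 fun b _ => by
    obtain ⟨N, hN⟩ := hM 1 b fun m _ => by rwa [one_pow]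
    simpa using hN N le_rfl

theorem LinearMap.exists_dual_comp_eq_of_linearIndependent_mkQ {K V W ι : Type*} [Field K]
    [AddCommGroup V] [Module K V] [AddCommGroup W] [Module K W]
    (f : V →ₗ[K] W) {ρ : Module.Dual K V} (hρ : LinearMap.ker f ≤ LinearMap.ker ρ)
    {v : ι → W} (hv : LinearIndependent K ((LinearMap.range f).mkQ ∘ v)) (w : ι → K) :
    ∃ φ : Module.Dual K W, φ ∘ₗ f = ρ ∧ ∀ i, φ (v i) = w i := by
  obtain ⟨ψ, rfl⟩ : ρ ∈ LinearMap.range f.dualMap := by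
    rw [LinearMap.range_dualMap_eq_dualAnnihilator_ker, Submodule.mem_dualAnnihilator]
    exact fun x hx => hρ hx
  obtain ⟨g, hg⟩ := (Finsupp.linearCombination K ((LinearMap.range f).mkQ ∘ v))
    |>.exists_leftInverse_of_injective (LinearMap.ker_eq_bot.mpr hv)
  have hgv (i : ι) : g (Submodule.Quotient.mk (v i)) = Finsupp.single i 1 := by
    simpa using LinearMap.congr_fun hg (Finsupp.single i 1)
  refine ⟨ψ + Finsupp.linearCombination K (fun i => w i - ψ (v i)) ∘ₗ g ∘ₗ
    (LinearMap.range f).mkQ, ?_, fun i => by simp [hgv]⟩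
  ext x
  simp [(Submodule.Quotient.mk_eq_zero _).2 (LinearMap.mem_range_self f x)]

theorem MvPolynomial.derivation_apply_eq_sum_pderiv {R σ : Type*} [CommSemiring R] [Fintype σ]
    (D : Derivation R (MvPolynomial σ R) (MvPolynomial σ R)) (p : MvPolynomial σ R) :
    D p = ∑ i, pderiv i p * D (X i) := by
  classical
  have hsum (q : MvPolynomial σ R) :
      (∑ i, D (X i) • pderiv i) q = ∑ i, pderiv i q * D (X i) := by
    rw [← Derivation.coeFnAddMonoidHom_apply, map_sum, Finset.sum_apply]
    simp [Derivation.coeFnAddMonoidHom_apply, mul_comm]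
  have hD : D = ∑ i, D (X i) • pderiv i := derivation_ext fun j => by
    simp [hsum, Pi.single_apply]
  conv_lhs => rw [hD]
  exact hsum p

namespace Polynomial

variable {K : Type*} [Field K]

noncomputable def twistedDerivative (P : K[X]) : K[X] →ₗ[K] K[X] :=
  derivative + LinearMap.mulLeft K P

@[simp]
lemma twistedDerivative_apply (P c : K[X]) :
    twistedDerivative P c = derivative c + P * c :=
  rfl

lemma degree_twistedDerivative {P c : K[X]} (hP : P ≠ 0) (hc : c ≠ 0) :
    (twistedDerivative P c).degree = P.degree + c.degree := by
  have hlt : (derivative c).degree < (P * c).degree := by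
    rw [degree_mul]
    exact (degree_derivative_lt hc).trans_le (le_add_of_nonneg_left (zero_le_degree_iff.2 hP))
  rw [twistedDerivative_apply, degree_add_eq_right_of_degree_lt hlt, degree_mul]

lemma disjoint_degreeLT_range_twistedDerivative {P : K[X]} (hP : P ≠ 0) :
    Disjoint (degreeLT K P.natDegree) (LinearMap.range (twistedDerivative P)) := by
  rw [Submodule.disjoint_def]
  rintro _ hlt ⟨c, rfl⟩
  by_contra hne
  have hc : c ≠ 0 := by rintro rfl; simp at hne
  rw [mem_degreeLT, degree_twistedDerivative hP hc, ← degree_eq_natDegree hP] at hlt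
  exact hlt.not_ge (le_add_of_nonneg_right (zero_le_degree_iff.2 hc))

lemma linearIndependent_mkQ_range_twistedDerivative {ι : Type*} {P : K[X]} {v : ι → K[X]}
    (hv : LinearIndependent K v) (hdeg : ∀ i, (v i).degree < P.degree) :
    LinearIndependent K ((LinearMap.range (twistedDerivative P)).mkQ ∘ v) := by
  by_cases hP : P = 0
  · have : IsEmpty ι := ⟨fun i => by simpa [hP] using hdeg i⟩
    exact linearIndependent_empty_type
  refine hv.map ?_
  rw [Submodule.ker_mkQ]
  refine (disjoint_degreeLT_range_twistedDerivative hP).mono_left ?_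
  rw [Submodule.span_le, Set.range_subset_iff]
  intro i
  rw [SetLike.mem_coe, mem_degreeLT, ← degree_eq_natDegree hP]
  exact hdeg i

lemma ker_twistedDerivative_le [CharZero K] {P : K[X]} {ρ : Module.Dual K K[X]}
    (hρ : P = 0 → ρ 1 = 0) : LinearMap.ker (twistedDerivative P) ≤ LinearMap.ker ρ := by
  intro c hc
  rw [LinearMap.mem_ker] at hc ⊢
  by_cases hP : P = 0
  · subst hP
    rw [twistedDerivative_apply, zero_mul, add_zero] at hc
    rw [eq_C_of_derivative_eq_zero hc, ← mul_one (C _), ← smul_eq_C_mul, map_smul, hρ rfl,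
      smul_zero]
  · by_contra hne
    have hc0 : c ≠ 0 := by rintro rfl; simp at hne
    have := degree_twistedDerivative hP hc0
    rw [hc, degree_zero] at this
    exact WithBot.add_ne_bot.2 ⟨degree_ne_bot.2 hP, degree_ne_bot.2 hc0⟩ this.symm

end Polynomial

namespace ShamsuddinDerivation

open Finsupp

variable {K τ : Type*} [Field K]

section Construction

open Polynomial

lemma degree_sub_single_one_add_one {γ : τ →₀ ℕ} {t : τ} (ht : γ t ≠ 0) :
    (γ - single t 1).degree + 1 = γ.degree := by
  conv_rhs => rw [← sub_add_single_one_cancel ht]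
  rw [map_add, degree_single]

lemma exists_eq_add_single_of_degree_eq_succ {γ : τ →₀ ℕ} {n : ℕ} (h : γ.degree = n + 1) :
    ∃ δ t, δ.degree = n ∧ γ = δ + single t 1 := by
  obtain ⟨t, ht⟩ : ∃ t, γ t ≠ 0 := by
    by_contra! h0
    simp [show γ = 0 from Finsupp.ext h0] at h
  refine ⟨γ - single t 1, t, ?_, (sub_add_single_one_cancel ht).symm⟩
  have := degree_sub_single_one_add_one ht
  omega

variable (a b : τ → K[X])

noncomputable def lowerTerm (θ : (τ →₀ ℕ) → Module.Dual K K[X]) (β : τ →₀ ℕ) :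
    Module.Dual K K[X] :=
  β.sum fun t k => k • θ (β - single t 1) ∘ₗ LinearMap.mulLeft K (b t)

def AnnihilatesAt (θ : (τ →₀ ℕ) → Module.Dual K K[X]) (β : τ →₀ ℕ) : Prop :=
  θ β ∘ₗ twistedDerivative (weight a β) = -lowerTerm b θ β

/-- The second clause is what makes `AnnihilatesAt` solvable at the next levels where the
weight vanishes. -/
def IsAdmissible (n : ℕ) (θ : (τ →₀ ℕ) → Module.Dual K K[X]) : Prop :=
  (∀ β : τ →₀ ℕ, β.degree ≤ n → AnnihilatesAt a b θ β) ∧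
    ∀ γ : τ →₀ ℕ, γ.degree ≤ n + 1 → weight a γ = 0 → lowerTerm b θ γ 1 = 0

variable {a b}

lemma lowerTerm_congr {θ θ' : (τ →₀ ℕ) → Module.Dual K K[X]} {β : τ →₀ ℕ}
    (h : ∀ t, β t ≠ 0 → θ (β - single t 1) = θ' (β - single t 1)) :
    lowerTerm b θ β = lowerTerm b θ' β :=
  Finsupp.sum_congr fun t ht => by rw [h t (mem_support_iff.1 ht)]

@[simp]
lemma lowerTerm_zero (θ : (τ →₀ ℕ) → Module.Dual K K[X]) : lowerTerm b θ 0 = 0 :=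
  sum_zero_index

lemma lowerTerm_single (θ : (τ →₀ ℕ) → Module.Dual K K[X]) (t : τ) :
    lowerTerm b θ (single t 1) = θ 0 ∘ₗ LinearMap.mulLeft K (b t) := by
  simp [lowerTerm, sum_single_index]

lemma lowerTerm_single_add_single_apply_one (θ : (τ →₀ ℕ) → Module.Dual K K[X]) (t u : τ) :
    lowerTerm b θ (single t 1 + single u 1) 1 = θ (single u 1) (b t) + θ (single t 1) (b u) := by
  rw [lowerTerm, sum_add_index' (by simp) (by simp [add_smul]), sum_single_index (by simp),
    sum_single_index (by simp), add_tsub_cancel_left, add_tsub_cancel_right]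
  simp

variable [CharZero K] (hdeg : ∀ t, (b t).degree < (a t).degree)
  (hli : ∀ p, LinearIndepOn K b {t | a t = p})
include hdeg hli

lemma exists_dual_comp_twistedDerivative (P : K[X]) {ρ : Module.Dual K K[X]}
    (hρ : P = 0 → ρ 1 = 0) (w : τ → K) :
    ∃ φ : Module.Dual K K[X], φ ∘ₗ twistedDerivative P = ρ ∧ ∀ u, a u = -P → φ (b u) = w u := by
  obtain ⟨φ, hφρ, hφw⟩ := (twistedDerivative P).exists_dual_comp_eq_of_linearIndependent_mkQ
    (ker_twistedDerivative_le hρ)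
    (linearIndependent_mkQ_range_twistedDerivative (hli (-P)) fun u => by
      have := hdeg u
      rwa [show a u = -P from u.2, degree_neg] at this)
    fun u : {u | a u = -P} => w u
  exact ⟨φ, hφρ, fun u hu => hφw ⟨u, hu⟩⟩

omit [CharZero K] in
lemma exists_dual_comp_twistedDerivative_eq_zero_apply_one (t : τ) :
    ∃ σ : Module.Dual K K[X], σ ∘ₗ twistedDerivative (a t) = 0 ∧ σ 1 = 1 := by
  have hb : b t ≠ 0 := (hli (a t)).ne_zero rfl
  obtain ⟨σ, hσ, hσ1⟩ := (twistedDerivative (a t)).exists_dual_comp_eq_of_linearIndependent_mkQ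
    (ρ := 0) (by simp)
    (linearIndependent_mkQ_range_twistedDerivative (v := fun _ : Unit => 1)
      (linearIndependent_unique_iff.2 one_ne_zero) fun _ => by
        rw [degree_one]
        exact (zero_le_degree_iff.2 hb).trans_lt (hdeg t))
    fun _ => 1
  exact ⟨σ, hσ, hσ1 ()⟩

lemma exists_levelOne_family (t₀ : τ) :
    ∃ f : τ → Module.Dual K K[X], (∀ t, f t ∘ₗ twistedDerivative (a t) = 0) ∧ f t₀ 1 = 1 ∧
      ∀ t u, a t + a u = 0 → f u (b t) + f t (b u) = 0 := by
  have ha (t : τ) : a t ≠ 0 := fun h => by simpa [h] using hdeg t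
  obtain ⟨σ, hσ, hσ1⟩ := exists_dual_comp_twistedDerivative_eq_zero_apply_one hdeg hli t₀
  classical
  -- in a cancelling pair `a t + a t₀ = 0`, the functional at `t` compensates the value of `σ`
  have hpartner (t : τ) : ∃ φ : Module.Dual K K[X], φ ∘ₗ twistedDerivative (a t) = 0 ∧
      ∀ u, a u = -a t → φ (b u) = if u = t₀ then -σ (b t) else 0 :=
    exists_dual_comp_twistedDerivative hdeg hli (a t) (fun h => absurd h (ha t)) _
  choose φ hφ hφb using hpartner
  refine ⟨fun t => if t = t₀ then σ else φ t, fun t => ?_, by simp [hσ1], fun t u hw => ?_⟩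
  · by_cases ht : t = t₀
    · subst ht
      simpa using hσ
    · simpa [ht] using hφ t
  have htu : t ≠ u := by
    rintro rfl
    exact ha t (by simpa [← two_smul ℕ] using hw)
  have hφut := hφb u t (eq_neg_of_add_eq_zero_left hw)
  have hφtu := hφb t u (eq_neg_of_add_eq_zero_right hw)
  by_cases ht : t = t₀
  · subst ht
    simp [htu.symm, hφut]
  by_cases hu : u = t₀
  · subst hu
    simp [htu, hφtu]
  simp [ht, hu, hφut, hφtu]

lemma exists_isAdmissible_one (t₀ : τ) :
    ∃ θ, IsAdmissible a b 1 θ ∧ θ (single t₀ 1) 1 = 1 := by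
  obtain ⟨f, hf, hf₁, hfb⟩ := exists_levelOne_family hdeg hli t₀
  let θ := Function.extend (fun t => single t 1) f 0
  have hθ (t : τ) : θ (single t 1) = f t :=
    (single_left_injective one_ne_zero).extend_apply f 0 t
  have hθ0 : θ 0 = 0 := Function.extend_apply' _ _ _ fun ⟨t, ht⟩ => by simp at ht
  refine ⟨θ, ⟨fun β hβ => ?_, fun γ hγ hw => ?_⟩, by rw [hθ, hf₁]⟩
  · obtain h | h : β.degree = 0 ∨ β.degree = 0 + 1 := by omega
    · rw [degree_eq_zero_iff] at h
      simp [h, AnnihilatesAt, hθ0]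
    · obtain ⟨δ, t, hδ, rfl⟩ := exists_eq_add_single_of_degree_eq_succ h
      rw [degree_eq_zero_iff] at hδ
      simp [hδ, AnnihilatesAt, lowerTerm_single, weight_single, hθ, hθ0, hf]
  · obtain h | h | h : γ.degree = 0 ∨ γ.degree = 0 + 1 ∨ γ.degree = 1 + 1 := by omega
    · simp [(degree_eq_zero_iff _).1 h]
    · obtain ⟨δ, t, hδ, rfl⟩ := exists_eq_add_single_of_degree_eq_succ h
      rw [degree_eq_zero_iff] at hδ
      have ha : a t ≠ 0 := fun h => by simpa [h] using hdeg t
      simp [hδ, weight_single, ha] at hw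
    · obtain ⟨δ, t, hδ, rfl⟩ := exists_eq_add_single_of_degree_eq_succ h
      obtain ⟨δ', u, hδ', rfl⟩ := exists_eq_add_single_of_degree_eq_succ hδ
      rw [degree_eq_zero_iff] at hδ'
      subst hδ'
      rw [zero_add, map_add, weight_single, weight_single, one_smul, one_smul] at hw
      rw [zero_add, lowerTerm_single_add_single_apply_one, hθ, hθ]
      exact hfb u t hw

lemma IsAdmissible.exists_succ {n : ℕ} {θ : (τ →₀ ℕ) → Module.Dual K K[X]}
    (hθ : IsAdmissible a b n θ) :
    ∃ θ', IsAdmissible a b (n + 1) θ' ∧ ∀ β : τ →₀ ℕ, β.degree ≤ n → θ' β = θ β := by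
  have hex (β : τ →₀ ℕ) : ∃ φ : Module.Dual K K[X], β.degree ≤ n + 1 →
      φ ∘ₗ twistedDerivative (weight a β) = -lowerTerm b θ β ∧
        ∀ u, a u = -weight a β → φ (b u) = 0 := by
    by_cases hβ : β.degree ≤ n + 1
    · obtain ⟨φ, hφ⟩ := exists_dual_comp_twistedDerivative hdeg hli (weight a β)
        (ρ := -lowerTerm b θ β) (fun hw => by simp [hθ.2 β hβ hw]) 0
      exact ⟨φ, fun _ => hφ⟩
    · exact ⟨0, fun h => absurd h hβ⟩
  choose φ hφ using hex
  classical
  let θ' β := if β.degree ≤ n then θ β else φ β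
  have hθ' (β : τ →₀ ℕ) (hβ : β.degree ≤ n) : θ' β = θ β := if_pos hβ
  have hlower (β : τ →₀ ℕ) (hβ : β.degree ≤ n + 1) : lowerTerm b θ' β = lowerTerm b θ β :=
    lowerTerm_congr fun t ht => hθ' _ (by have := degree_sub_single_one_add_one ht; omega)
  refine ⟨θ', ⟨fun β hβ => ?_, fun γ hγ hw => ?_⟩, hθ'⟩
  · rw [AnnihilatesAt, hlower β hβ]
    by_cases hβn : β.degree ≤ n
    · rw [hθ' β hβn]
      exact hθ.1 β hβn
    · rw [show θ' β = φ β from if_neg hβn]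
      exact (hφ β hβ).1
  · by_cases hγn : γ.degree ≤ n + 1
    · rw [hlower γ hγn]
      exact hθ.2 γ hγn hw
    simp only [lowerTerm, Finsupp.sum, LinearMap.sum_apply]
    refine Finset.sum_eq_zero fun u hu => ?_
    have hu' := mem_support_iff.1 hu
    have hdeg' := degree_sub_single_one_add_one hu'
    have hwu : a u = -weight a (γ - single u 1) := by
      rw [eq_neg_iff_add_eq_zero, add_comm, weight_sub_single_add hu', hw]
    simp [θ', if_neg (show ¬(γ - single u 1).degree ≤ n by omega),
      (hφ _ (by omega)).2 u hwu]

lemma exists_isAdmissible (t₀ : τ) (n : ℕ) :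
    ∃ θ, IsAdmissible a b (n + 1) θ ∧ θ (single t₀ 1) 1 = 1 := by
  induction n with
  | zero => exact exists_isAdmissible_one hdeg hli t₀
  | succ n ih =>
    obtain ⟨θ, hθ, hθ₁⟩ := ih
    obtain ⟨θ', hθ', hagree⟩ := hθ.exists_succ hdeg hli
    exact ⟨θ', hθ', by rwa [hagree _ (by simp)]⟩

end Construction

open scoped Polynomial

/-- `X none` plays the role of `x` and `X (some t)` that of `y_t`: the functional sends
`c(x) y^β` to `θ β c`. -/
noncomputable def pairing (θ : (τ →₀ ℕ) → Module.Dual K K[X]) :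
    Module.Dual K (MvPolynomial (Option τ) K) :=
  (basisMonomials (Option τ) K).constr K fun m => θ m.some (Polynomial.X ^ m none)

lemma pairing_monomial (θ : (τ →₀ ℕ) → Module.Dual K K[X]) (m : Option τ →₀ ℕ) (c : K) :
    pairing θ (monomial m c) = c * θ m.some (Polynomial.X ^ m none) := by
  have : monomial m c = c • basisMonomials (Option τ) K m := by
    rw [coe_basisMonomials, smul_monomial, smul_eq_mul, mul_one]
  rw [this, map_smul, pairing, Module.Basis.constr_basis, smul_eq_mul]

lemma pairing_aeval_mul_monomial (θ : (τ →₀ ℕ) → Module.Dual K K[X]) (q : K[X])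
    (m : Option τ →₀ ℕ) (c : K) :
    pairing θ (Polynomial.aeval (X none) q * monomial m c) =
      c * θ m.some (q * Polynomial.X ^ m none) := by
  induction q using Polynomial.induction_on' with
  | add p q hp hq => simp only [map_add, add_mul, hp, hq, mul_add]
  | monomial n d =>
    rw [Polynomial.aeval_monomial, X_pow_eq_monomial, algebraMap_eq, C_mul_monomial, mul_one,
      monomial_mul, pairing_monomial, some_add, some_single_none, zero_add, Finsupp.add_apply,
      single_eq_same, ← Polynomial.C_mul_X_pow_eq_monomial, mul_assoc (Polynomial.C d),
      ← pow_add, ← Polynomial.smul_eq_C_mul, map_smul, smul_eq_mul]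
    ring

lemma degree_some_le (m : Option τ →₀ ℕ) : m.some.degree ≤ m.degree :=
  degree_comapDomain_le_of_canonicallyOrderedAdd _

variable [Fintype τ] {a b : τ → K[X]}
  {D : Derivation K (MvPolynomial (Option τ) K) (MvPolynomial (Option τ) K)}
  (hDx : D (X none) = 1)
  (hDy : ∀ t, D (X (some t)) =
    Polynomial.aeval (X none) (a t) * X (some t) + Polynomial.aeval (X none) (b t))
include hDx hDy

lemma pairing_derivation_monomial (θ : (τ →₀ ℕ) → Module.Dual K K[X]) (m : Option τ →₀ ℕ) :
    pairing θ (D (monomial m 1)) =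
      (θ m.some ∘ₗ Polynomial.twistedDerivative (weight a m.some) + lowerTerm b θ m.some)
        (Polynomial.X ^ m none) := by
  have hsome (t : τ) : pderiv (some t) (monomial m (1 : K)) * D (X (some t)) =
      Polynomial.aeval (X none) (a t) * monomial m (m (some t) : K) +
        Polynomial.aeval (X none) (b t) * monomial (m - single (some t) 1) (m (some t) : K) := by
    rw [hDy, mul_add, mul_left_comm, mul_comm _ (X _), X_mul_pderiv_monomial, smul_monomial,
      nsmul_eq_mul, mul_one, pderiv_monomial, one_mul, mul_comm _ (Polynomial.aeval _ _)]
  have hnone_some : (m - single none 1).some = m.some := by ext t; simp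
  have hsome_some (t : τ) : (m - single (some t) 1).some = m.some - single t 1 := by
    ext u; simp [single_apply_left (Option.some_injective _)]
  have hsome_none (t : τ) : (m - single (some t) 1 : Option τ →₀ ℕ) none = m none := by simp
  rw [derivation_apply_eq_sum_pderiv, Fintype.sum_option, hDx, mul_one, pderiv_monomial,
    map_add, map_sum]
  simp only [hsome, map_add, pairing_monomial, pairing_aeval_mul_monomial, hnone_some, hsome_some,
    hsome_none, tsub_apply, single_eq_same]
  rw [LinearMap.add_apply, LinearMap.comp_apply, Polynomial.twistedDerivative_apply,
    Polynomial.derivative_X_pow, weight_eq_sum, Finset.sum_mul, map_add, map_sum, lowerTerm,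
    Finsupp.sum_fintype _ _ (by simp), LinearMap.sum_apply, Finset.sum_add_distrib]
  simp only [← Polynomial.smul_eq_C_mul, smul_mul_assoc, map_smul, map_nsmul, LinearMap.smul_apply,
    LinearMap.comp_apply, LinearMap.mulLeft_apply]
  simp only [smul_eq_mul, nsmul_eq_mul, some_apply, one_mul, add_assoc]

lemma pairing_derivation_eq_zero {θ : (τ →₀ ℕ) → Module.Dual K K[X]}
    {F : MvPolynomial (Option τ) K} (hθ : ∀ m ∈ F.support, AnnihilatesAt a b θ m.some) :
    pairing θ (D F) = 0 := by
  rw [F.as_sum, map_sum, map_sum]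
  refine Finset.sum_eq_zero fun m hm => ?_
  rw [← mul_one (coeff m F), ← smul_eq_mul, ← smul_monomial, D.map_smul, map_smul,
    pairing_derivation_monomial hDx hDy, hθ m hm, neg_add_cancel, LinearMap.zero_apply, smul_zero]

theorem X_some_notMem_range [CharZero K] (hdeg : ∀ t, (b t).degree < (a t).degree)
    (hli : ∀ p, LinearIndepOn K b {t | a t = p}) (t₀ : τ) :
    X (some t₀) ∉ LinearMap.range D.toLinearMap := by
  rintro ⟨F, hF⟩
  obtain ⟨θ, hθ, hθ₁⟩ := exists_isAdmissible hdeg hli t₀ F.totalDegree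
  have hzero := pairing_derivation_eq_zero hDx hDy fun m hm =>
    hθ.1 _ (((degree_some_le m).trans (le_totalDegree hm)).trans (Nat.le_succ _))
  rw [show D F = X (some t₀) from hF, X, pairing_monomial] at hzero
  simp [hθ₁] at hzero

end ShamsuddinDerivation

/-- For the Shamsuddin derivation `D = ∂ₓ + Σᵢⱼ (aᵢ(x) yᵢⱼ + bᵢⱼ(x)) ∂ᵢⱼ`
(with `aᵢ ≠ aₗ` for `i ≠ l`): if `deg aᵢ > deg bᵢⱼ` for all `i, j` and the `bᵢ₁, …, bᵢᵣᵢ`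
are linearly independent over `K` for each `i`, then `Im D` is not a Mathieu–Zhao space. -/
theorem statement2 (K : Type*) [Field K] [CharZero K]
    (s : ℕ) (hs : 1 ≤ s) (r : Fin s → ℕ) (hr : ∀ i, 1 ≤ r i)
    (a : Fin s → Polynomial K) (b : (i : Fin s) → Fin (r i) → Polynomial K)
    (ha : ∀ i l : Fin s, i ≠ l → a i ≠ a l)
    (D : Derivation K (MvPolynomial (Option (Σ i : Fin s, Fin (r i))) K)
      (MvPolynomial (Option (Σ i : Fin s, Fin (r i))) K))
    (hDx : D (X none) = 1)
    (hDy : ∀ (i : Fin s) (j : Fin (r i)),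
      D (X (some ⟨i, j⟩)) =
        Polynomial.aeval (X none) (a i) * X (some ⟨i, j⟩)
          + Polynomial.aeval (X none) (b i j))
    (hdeg : ∀ (i : Fin s) (j : Fin (r i)), (b i j).degree < (a i).degree)
    (hli : ∀ i : Fin s, LinearIndependent K (b i)) :
    ¬ IsMathieuZhao K (LinearMap.range D.toLinearMap) := by
  intro hMZ
  have hfiber (p : Polynomial K) :
      LinearIndepOn K (fun t : Σ i, Fin (r i) => b t.1 t.2) {t | a t.1 = p} := by
    rcases Set.eq_empty_or_nonempty {t : Σ i, Fin (r i) | a t.1 = p} with h | ⟨⟨i, j⟩, hij⟩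
    · rw [h]
      exact linearIndepOn_empty K _
    have hrange : LinearIndepOn K (fun t : Σ i, Fin (r i) => b t.1 t.2) (Set.range (Sigma.mk i)) :=
      (linearIndepOn_range_iff sigma_mk_injective _).2 (hli i)
    refine hrange.mono ?_
    rintro ⟨i', j'⟩ hi'
    obtain rfl : i' = i := by_contra fun hne => ha i' i hne (hi'.trans hij.symm)
    exact ⟨j', rfl⟩
  have hDy' : ∀ t : Σ i, Fin (r i), D (X (some t)) =
      Polynomial.aeval (X none) (a t.1) * X (some t) + Polynomial.aeval (X none) (b t.1 t.2) :=
    fun ⟨i, j⟩ => hDy i j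
  have htop := hMZ.eq_top_of_one_mem ⟨X none, hDx⟩
  have hnot := ShamsuddinDerivation.X_some_notMem_range (τ := Σ i : Fin s, Fin (r i))
    hDx hDy' (fun t => hdeg t.1 t.2) hfiber ⟨⟨0, hs⟩, ⟨0, hr ⟨0, hs⟩⟩⟩
  rw [htop] at hnot
  exact hnot Submodule.mem_top
end

section
/- Let K be a field of characteristic zero, let s ≥ 1 and r_1,…,r_s ≥ 1 be integers, and fix i ∈ {1,…,s}. Let R = K[x, y_{1,1},…,y_{s,r_s}] and let D = ∂_x + Σ_{j=1}^{r_i} (a_i(x)·y_{i,j} + b_{i,j}(x))·∂_{i,j} + Σ_{l≠i, 1≤l≤s} Σ_{j=1}^{r_l} a_l(x)·y_{l,j}·∂_{l,j} be the K-derivation of R, where a_1,…,a_s, b_{i,1},…,b_{i,r_i} ∈ K[x]. Let D_i = ∂_x + Σ_{j=1}^{r_i} (a_i(x)·y_{i,j} + b_{i,j}(x))·∂_{i,j} be the induced K-derivation of R_i = K[x, y_{i,1},…,y_{i,r_i}]. If Im D = D(R) is a Mathieu–Zhao space of R, then Im D_i = D_i(R_i) is a Mathieu–Zhao space of R_i.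 -/
open MvPolynomial

set_option linter.unusedVariables false in
lemma deriv_comm_aux {K S : Type*} [CommRing K] [CommRing S] [Algebra K S] {σ : Type*}
    (φ : MvPolynomial σ K →ₐ[K] S)
    (D : Derivation K (MvPolynomial σ K) (MvPolynomial σ K))
    (E : Derivation K S S)
    (h : ∀ n, φ (D (X n)) = E (φ (X n))) :
    ∀ p, φ (D p) = E (φ p) := by
  intro p
  induction p using MvPolynomial.induction_on with
  | C c => simp [MvPolynomial.C_eq_smul_one]
  | add p q hp hq => simp [hp, hq]
  | mul_X p n hp => simp [Derivation.leibniz, hp, h n]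


/-- For `D = ∂ₓ + Σⱼ (aᵢ(x) yᵢⱼ + bᵢⱼ(x)) ∂ᵢⱼ + Σ_{l ≠ i} Σⱼ aₗ(x) yₗⱼ ∂ₗⱼ`
(the `b`'s vanish away from the fixed index `i`) and the induced derivation
`Dᵢ = ∂ₓ + Σⱼ (aᵢ(x) yᵢⱼ + bᵢⱼ(x)) ∂ᵢⱼ` of `K[x, yᵢ₁, …, yᵢᵣᵢ]`:
if `Im D` is a Mathieu–Zhao space, then so is `Im Dᵢ`. -/
theorem statement4 (K : Type*) [Field K] [CharZero K]
    (s : ℕ) (hs : 1 ≤ s) (r : Fin s → ℕ) (hr : ∀ l, 1 ≤ r l) (i : Fin s)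
    (a : Fin s → Polynomial K) (b : (l : Fin s) → Fin (r l) → Polynomial K)
    (hb : ∀ l : Fin s, l ≠ i → ∀ j : Fin (r l), b l j = 0)
    (D : Derivation K (MvPolynomial (Option (Σ l : Fin s, Fin (r l))) K)
      (MvPolynomial (Option (Σ l : Fin s, Fin (r l))) K))
    (hDx : D (X none) = 1)
    (hDy : ∀ (l : Fin s) (j : Fin (r l)),
      D (X (some ⟨l, j⟩)) =
        Polynomial.aeval (X none) (a l) * X (some ⟨l, j⟩)
          + Polynomial.aeval (X none) (b l j))
    (Di : Derivation K (MvPolynomial (Option (Fin (r i))) K)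
      (MvPolynomial (Option (Fin (r i))) K))
    (hDix : Di (X none) = 1)
    (hDiy : ∀ j : Fin (r i),
      Di (X (some j)) =
        Polynomial.aeval (X none) (a i) * X (some j)
          + Polynomial.aeval (X none) (b i j))
    (hMZ : IsMathieuZhao K (LinearMap.range D.toLinearMap)) :
    IsMathieuZhao K (LinearMap.range Di.toLinearMap) := by
  classical
  let σ := Option (Σ l : Fin s, Fin (r l))
  let τ := Option (Fin (r i))
  let f : σ → MvPolynomial τ K := fun n =>
    match n with
    | none => X none
    | some ⟨l, j⟩ => if h : l = i then X (some (Fin.cast (congrArg r h) j)) else 0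
  let φ : MvPolynomial σ K →ₐ[K] MvPolynomial τ K := aeval f
  let g : τ → MvPolynomial σ K := fun n =>
    match n with
    | none => X none
    | some j => X (some ⟨i, j⟩)
  let ψ : MvPolynomial τ K →ₐ[K] MvPolynomial σ K := aeval g
  have hφX : ∀ n, φ (X n) = f n := fun n => aeval_X f n
  have hψX : ∀ n, ψ (X n) = g n := fun n => aeval_X g n
  have hφψ : ∀ x : MvPolynomial τ K, φ (ψ x) = x := by
    intro x
    have : φ.comp ψ = AlgHom.id K (MvPolynomial τ K) := by
      apply MvPolynomial.algHom_ext
      intro n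
      cases n with
      | none => simp [hφX, hψX, f, g]
      | some j => simp [hφX, hψX, f, g]
    calc φ (ψ x) = (φ.comp ψ) x := rfl
      _ = x := by rw [this]; rfl
  have hcomm1 : ∀ p, φ (D p) = Di (φ p) := by
    apply deriv_comm_aux
    intro n
    cases n with
    | none => rw [hDx, hφX]; simpa [f] using hDix.symm
    | some lj =>
      obtain ⟨l, j⟩ := lj
      rw [hDy, hφX]
      by_cases h : l = i
      · subst h
        simp only [f, dif_pos rfl]
        rw [map_add, map_mul, ← Polynomial.aeval_algHom_apply, hφX, hφX,
          ← Polynomial.aeval_algHom_apply, hφX]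
        have hc : (Fin.cast (congrArg r (rfl : l = l)) j) = j := Fin.ext rfl
        simp [f, hDiy, hc]
      · rw [hb l h]
        simp only [map_add, map_mul, ← Polynomial.aeval_algHom_apply, hφX]
        simp [f, dif_neg h]
  have hcomm2 : ∀ p, ψ (Di p) = D (ψ p) := by
    apply deriv_comm_aux
    intro n
    cases n with
    | none => rw [hDix, hψX]; simpa [g] using hDx.symm
    | some j =>
      rw [hDiy, hψX]
      simp only [g]
      rw [map_add, map_mul, ← Polynomial.aeval_algHom_apply, hψX,
        ← Polynomial.aeval_algHom_apply, hψX, hψX]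
      simp only [g]
      rw [hDy]
  intro α β hα
  have hmem : ∀ m : ℕ, 1 ≤ m → (ψ α) ^ m ∈ LinearMap.range D.toLinearMap := by
    intro m hm
    obtain ⟨h, hh⟩ := hα m hm
    refine ⟨ψ h, ?_⟩
    simp only [Derivation.coeFn_coe] at hh ⊢
    rw [← hcomm2, hh, map_pow]
  obtain ⟨N, hN⟩ := hMZ (ψ α) (ψ β) hmem
  refine ⟨N, fun m hm => ?_⟩
  obtain ⟨h, hh⟩ := hN m hm
  refine ⟨φ h, ?_⟩
  simp only [Derivation.coeFn_coe] at hh ⊢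
  rw [← hcomm1, hh, map_mul, map_pow, hφψ, hφψ]
end

section
/- Let K be a field of characteristic zero, let s ≥ 1 and r_1,…,r_s ≥ 1 be integers, and fix i ∈ {1,…,s}. Let R = K[x, y_{1,1},…,y_{s,r_s}] and let D = ∂_x + Σ_{j=1}^{r_i} (a_i(x)·y_{i,j} + b_{i,j}(x))·∂_{i,j} + Σ_{l≠i, 1≤l≤s} Σ_{j=1}^{r_l} a_l(x)·y_{l,j}·∂_{l,j} be the K-derivation of R, where a_1,…,a_s, b_{i,1},…,b_{i,r_i} ∈ K[x]. If Im D = D(R) is a Mathieu–Zhao space of R, then a_i(x) is constant, i.e., a_i(x) ∈ K. -/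
/-!
Since `D x = 1`, the Mathieu–Zhao property applied to the element `1` gives `Im D = R`.
Sending the variables `y_{l,j}` with `l ≠ i` to `0` commutes with `D` (because `b_{l,j} = 0`
there), so some `G ∈ K[x, y_1, …, y_r]` satisfies `D G = y_1` for the one-block derivation
`D = ∂_x + Σ_j (a y_j + b_j) ∂_j`, where `a = a_i`.

Grade by the degree in the `y`'s. Then `D = D₀ + D₁`, where `D₀ = ∂_x + a Σ_j y_j ∂_j` keeps the
degree and, by Euler's identity, acts on forms of degree `m` as `∂_x + m a`, while
`D₁ = Σ_j b_j ∂_j` lowers the degree by one. If `a` is not constant and `q ≠ 0`, then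
`∂_x q + m a q` has positive degree in `x`, which the components of `y_1` do not have. Descending
from the top degree, every component `G_m` with `m ≥ 1` therefore vanishes, and the degree-one
component of `D G`, namely `D₀ G_1 + D₁ G_2 = 0`, cannot be `y_1`.
-/

open MvPolynomial

theorem Derivation.finset_sum_apply {R A M ι : Type*} [CommSemiring R] [CommSemiring A]
    [AddCommMonoid M] [Algebra R A] [Module A M] [Module R M] (s : Finset ι)
    (F : ι → Derivation R A M) (x : A) : (∑ i ∈ s, F i) x = ∑ i ∈ s, F i x := by
  rw [← Derivation.coeFnAddMonoidHom_apply, map_sum, Finset.sum_apply]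
  rfl

namespace MvPolynomial

variable {R : Type*} [CommSemiring R] {σ : Type*}

theorem derivation_apply_eq_sum_mul_pderiv [Fintype σ] [DecidableEq σ]
    (E : Derivation R (MvPolynomial σ R) (MvPolynomial σ R)) (p : MvPolynomial σ R) :
    E p = ∑ u, E (X u) * pderiv u p := by
  have hE : E = ∑ u, E (X u) • pderiv u := derivation_ext fun v => by
    simp [Derivation.finset_sum_apply, pderiv_X, Pi.single_apply]
  conv_lhs => rw [hE]
  simp [Derivation.finset_sum_apply]

theorem IsWeightedHomogeneous.pderiv_eq_zero_of_lt {w : σ → ℕ} {p : MvPolynomial σ R} {n : ℕ}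
    (hp : IsWeightedHomogeneous w p n) {u : σ} (h : n < w u) : pderiv u p = 0 := by
  refine pderiv_eq_zero_of_notMem_vars fun hu => ?_
  obtain ⟨d, hd, hud⟩ := (mem_vars_iff_mem_support u).mp hu
  have := Finsupp.le_weight_of_ne_zero' w (Finsupp.mem_support_iff.mp hud)
  rw [hp (mem_support_iff.mp hd)] at this
  omega

theorem weightedHomogeneousComponent_map_of_lowers {w : σ → ℕ} {k : ℕ}
    (L : MvPolynomial σ R →ₗ[R] MvPolynomial σ R)
    (hL : ∀ n p, IsWeightedHomogeneous w p (n + k) → IsWeightedHomogeneous w (L p) n)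
    (hL₀ : ∀ n < k, ∀ p, IsWeightedHomogeneous w p n → L p = 0) (m : ℕ) (p : MvPolynomial σ R) :
    weightedHomogeneousComponent w m (L p) = L (weightedHomogeneousComponent w (m + k) p) := by
  induction p using MvPolynomial.induction_on' with
  | add p q hp hq => simp only [map_add, hp, hq]
  | monomial d c =>
    have hd := isWeightedHomogeneous_monomial w d c rfl
    obtain hlt | ⟨n, hn⟩ := (lt_or_ge (Finsupp.weight w d) k).imp id Nat.exists_eq_add_of_le'
    · rw [hL₀ _ hlt _ hd, map_zero, hd.weightedHomogeneousComponent_ne _ (by omega), map_zero]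
    rw [hn] at hd
    have hLd := hL n _ hd
    obtain rfl | hmn := eq_or_ne m n
    · rw [hd.weightedHomogeneousComponent_same, hLd.weightedHomogeneousComponent_same]
    · rw [hd.weightedHomogeneousComponent_ne _ (by omega), map_zero,
        hLd.weightedHomogeneousComponent_ne _ hmn]

theorem isWeightedHomogeneous_aeval_X {w : σ → ℕ} {u : σ} (hu : w u = 0) (c : Polynomial R) :
    IsWeightedHomogeneous w (Polynomial.aeval (X u : MvPolynomial σ R) c) 0 := by
  induction c using Polynomial.induction_on' with
  | add p q hp hq => rw [map_add]; exact hp.add hq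
  | monomial n c =>
    simpa [hu] using (isWeightedHomogeneous_C w c).mul ((isWeightedHomogeneous_X R w u).pow n)

theorem algHom_apply_derivation_of_forall_X {S : Type*} [CommSemiring S] [Algebra R S]
    (φ : MvPolynomial σ R →ₐ[R] S) (E : Derivation R (MvPolynomial σ R) (MvPolynomial σ R))
    (E' : Derivation R S S) (h : ∀ u, φ (E (X u)) = E' (φ (X u))) (p : MvPolynomial σ R) :
    φ (E p) = E' (φ p) := by
  induction p using MvPolynomial.induction_on with
  | C c => rw [derivation_C, ← algebraMap_eq, AlgHom.commutes, E'.map_algebraMap, map_zero]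
  | add p q hp hq => rw [map_add, map_add, map_add, hp, hq, map_add]
  | mul_X p u hp => simp only [Derivation.leibniz, smul_eq_mul, map_add, map_mul, hp, h u]

end MvPolynomial

theorem Polynomial.natDegree_derivative_add_mul {S : Type*} [CommRing S] [NoZeroDivisors S]
    {A p : Polynomial S} (hA : 0 < A.natDegree) (hp : p ≠ 0) :
    (derivative p + A * p).natDegree = A.natDegree + p.natDegree := by
  have hAp : (A * p).natDegree = A.natDegree + p.natDegree :=
    natDegree_mul (ne_zero_of_natDegree_gt hA) hp
  rw [natDegree_add_eq_right_of_natDegree_lt, hAp]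
  have := natDegree_derivative_le p
  omega

theorem MvPolynomial.degreeOf_pderiv_add_aeval_mul_pos {R σ : Type*} [CommRing R] [IsDomain R]
    {c : Polynomial R} (hc : 0 < c.natDegree) {q : MvPolynomial (Option σ) R} (hq : q ≠ 0) :
    0 < degreeOf none (pderiv none q + Polynomial.aeval (X none) c * q) := by
  rw [← natDegree_optionEquivLeft]
  set Φ := optionEquivLeft R σ
  have hΦx : Φ (X none) = Polynomial.X := optionEquivLeft_X_none R σ
  have hΦ_pderiv : Φ (pderiv none q) = Polynomial.derivative (Φ q) :=
    algHom_apply_derivation_of_forall_X Φ.toAlgHom (pderiv none)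
      ((Polynomial.derivative' (R := MvPolynomial σ R)).restrictScalars R) (fun u => by
        rcases u with _ | j
        · simp [hΦx]
        · simp [Φ, optionEquivLeft_X_some]) q
  have hΦc : Φ (Polynomial.aeval (X none) c) = c.map (algebraMap R (MvPolynomial σ R)) := by
    rw [← Polynomial.aeval_algHom_apply, hΦx, Polynomial.aeval_X_left_eq_map]
  have hdeg := Polynomial.natDegree_map_eq_of_injective
    (f := algebraMap R (MvPolynomial σ R)) (C_injective σ R) c
  rw [map_add, map_mul, hΦ_pderiv, hΦc,
    Polynomial.natDegree_derivative_add_mul (hdeg ▸ hc) (EmbeddingLike.map_ne_zero_iff.mpr hq),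
    hdeg]
  omega

namespace AffineDerivation

noncomputable section

variable {K : Type*} [CommRing K] {ι : Type*}

/-- `X none` plays the role of `x` and `X (some j)` that of `y_j`; this weight makes the weighted
degree the degree in the `y`'s. -/
def yWeight : Option ι → ℕ := Option.elim' 0 fun _ => 1

theorem isWeightedHomogeneous_X_some (j : ι) :
    IsWeightedHomogeneous yWeight (X (some j) : MvPolynomial (Option ι) K) 1 :=
  isWeightedHomogeneous_X K yWeight (some j)

def linearPart (a : Polynomial K) :
    Derivation K (MvPolynomial (Option ι) K) (MvPolynomial (Option ι) K) :=
  mkDerivation K (Option.elim' 1 fun j => Polynomial.aeval (X none) a * X (some j))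

def constantPart (b : ι → Polynomial K) :
    Derivation K (MvPolynomial (Option ι) K) (MvPolynomial (Option ι) K) :=
  mkDerivation K (Option.elim' 0 fun j => Polynomial.aeval (X none) (b j))

/-- `∂_x + Σ_j (a(x) y_j + b_j(x)) ∂_{y_j}`. -/
def _root_.affineDerivation (a : Polynomial K) (b : ι → Polynomial K) :
    Derivation K (MvPolynomial (Option ι) K) (MvPolynomial (Option ι) K) :=
  linearPart a + constantPart b

theorem _root_.affineDerivation_X_none (a : Polynomial K) (b : ι → Polynomial K) :
    affineDerivation a b (X none) = 1 := by
  simp [affineDerivation, linearPart, constantPart]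

theorem _root_.affineDerivation_X_some (a : Polynomial K) (b : ι → Polynomial K) (j : ι) :
    affineDerivation a b (X (some j)) =
      Polynomial.aeval (X none) a * X (some j) + Polynomial.aeval (X none) (b j) := by
  simp [affineDerivation, linearPart, constantPart]

variable [Fintype ι] [DecidableEq ι]

theorem linearPart_apply_of_isWeightedHomogeneous {a : Polynomial K}
    {p : MvPolynomial (Option ι) K} {n : ℕ}
    (hp : IsWeightedHomogeneous yWeight p n) :
    linearPart a p = pderiv none p + Polynomial.aeval (X none) (n • a) * p := by
  have euler := hp.sum_weight_X_mul_pderiv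
  simp only [Fintype.sum_option, yWeight, Option.elim'_none, Option.elim'_some, zero_smul,
    one_smul, zero_add] at euler
  rw [derivation_apply_eq_sum_mul_pderiv, Fintype.sum_option, map_nsmul, smul_mul_assoc,
    ← mul_smul_comm, ← euler, Finset.mul_sum]
  simp [linearPart, mul_assoc]

theorem isWeightedHomogeneous_linearPart {a : Polynomial K} {p : MvPolynomial (Option ι) K}
    {n : ℕ} (hp : IsWeightedHomogeneous yWeight p n) :
    IsWeightedHomogeneous yWeight (linearPart a p) n := by
  rw [linearPart_apply_of_isWeightedHomogeneous hp]
  have hA := (isWeightedHomogeneous_aeval_X (w := yWeight) (u := none) rfl (n • a)).mul hp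
  rw [zero_add] at hA
  exact (hp.pderiv rfl).add hA

theorem constantPart_apply (b : ι → Polynomial K) (p : MvPolynomial (Option ι) K) :
    constantPart b p = ∑ j, Polynomial.aeval (X none) (b j) * pderiv (some j) p := by
  rw [derivation_apply_eq_sum_mul_pderiv, Fintype.sum_option]
  simp [constantPart]

theorem isWeightedHomogeneous_constantPart {b : ι → Polynomial K}
    {p : MvPolynomial (Option ι) K} {n : ℕ} (hp : IsWeightedHomogeneous yWeight p (n + 1)) :
    IsWeightedHomogeneous yWeight (constantPart b p) n := by
  rw [constantPart_apply]
  refine IsWeightedHomogeneous.sum _ _ _ fun j _ => ?_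
  have h := (isWeightedHomogeneous_aeval_X (w := yWeight) (u := none) rfl (b j)).mul
    (hp.pderiv (i := some j) rfl)
  rwa [zero_add] at h

theorem constantPart_eq_zero {b : ι → Polynomial K} {p : MvPolynomial (Option ι) K}
    (hp : IsWeightedHomogeneous yWeight p 0) : constantPart b p = 0 := by
  rw [constantPart_apply]
  exact Finset.sum_eq_zero fun j _ => by
    rw [hp.pderiv_eq_zero_of_lt (by simp [yWeight]), mul_zero]

theorem weightedHomogeneousComponent_affineDerivation (a : Polynomial K) (b : ι → Polynomial K)
    (m : ℕ) (p : MvPolynomial (Option ι) K) :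
    weightedHomogeneousComponent yWeight m (affineDerivation a b p) =
      linearPart a (weightedHomogeneousComponent yWeight m p) +
        constantPart b (weightedHomogeneousComponent yWeight (m + 1) p) := by
  rw [affineDerivation, Derivation.add_apply, map_add]
  exact congrArg₂ (· + ·)
    (weightedHomogeneousComponent_map_of_lowers (k := 0) (linearPart a).toLinearMap
      (fun _ _ => isWeightedHomogeneous_linearPart) (by simp) m p)
    (weightedHomogeneousComponent_map_of_lowers (k := 1) (constantPart b).toLinearMap
      (fun _ _ => isWeightedHomogeneous_constantPart)
      (fun n hn _ hp => constantPart_eq_zero (Nat.lt_one_iff.mp hn ▸ hp)) m p)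

end

section

variable {K : Type*} [Field K] [CharZero K] {ι : Type*} [Fintype ι] [DecidableEq ι]
  {a : Polynomial K} {b : ι → Polynomial K} {G : MvPolynomial (Option ι) K} {j₀ : ι}

theorem weightedHomogeneousComponent_eq_zero_of_succ_eq_zero (ha : 0 < a.natDegree)
    (hG : affineDerivation a b G = X (some j₀)) {m : ℕ}
    (h : weightedHomogeneousComponent yWeight (m + 2) G = 0) :
    weightedHomogeneousComponent yWeight (m + 1) G = 0 := by
  have hcomp := weightedHomogeneousComponent_affineDerivation a b (m + 1) G
  rw [hG, h, map_zero, add_zero,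
    linearPart_apply_of_isWeightedHomogeneous
      (weightedHomogeneousComponent_isWeightedHomogeneous _ _)] at hcomp
  by_contra hne
  have hpos := degreeOf_pderiv_add_aeval_mul_pos
    (c := (m + 1) • a) (by rwa [Polynomial.natDegree_smul _ (by omega)]) hne
  rw [← hcomp] at hpos
  have hX := isWeightedHomogeneous_X_some (K := K) j₀
  rcases eq_or_ne m 0 with rfl | hm
  · simp [hX.weightedHomogeneousComponent_same, degreeOf_X] at hpos
  · simp [hX.weightedHomogeneousComponent_ne _ (by omega : m + 1 ≠ 1)] at hpos

theorem _root_.affineDerivation_apply_ne_X_some (ha : 0 < a.natDegree) (b : ι → Polynomial K)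
    (G : MvPolynomial (Option ι) K) (j₀ : ι) : affineDerivation a b G ≠ X (some j₀) := by
  intro hG
  set N := weightedTotalDegree yWeight G + 1
  have hvanish : ∀ m ≤ N, weightedHomogeneousComponent yWeight (m + 1) G = 0 := fun m hm =>
    Nat.decreasingInduction
      (motive := fun m _ => weightedHomogeneousComponent yWeight (m + 1) G = 0)
      (fun _ _ ih => weightedHomogeneousComponent_eq_zero_of_succ_eq_zero ha hG ih)
      (weightedHomogeneousComponent_eq_zero _ _ (by omega)) hm
  have hX := isWeightedHomogeneous_X_some (K := K) j₀
  have hcomp := weightedHomogeneousComponent_affineDerivation a b 1 G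
  rw [hG, hX.weightedHomogeneousComponent_same, hvanish 0 (by omega), hvanish 1 (by omega),
    map_zero, map_zero, add_zero] at hcomp
  exact X_ne_zero _ hcomp

end

end AffineDerivation

namespace MvPolynomial

variable {R : Type*} [CommSemiring R] {α : Type*} [DecidableEq α] {κ : α → Type*}

noncomputable def fiberRestrict (i : α) :
    MvPolynomial (Option (Σ l, κ l)) R →ₐ[R] MvPolynomial (Option (κ i)) R :=
  aeval (Option.elim' (X none) fun v => if h : v.1 = i then X (some (h ▸ v.2)) else 0)

theorem fiberRestrict_X_none (i : α) :
    fiberRestrict (R := R) (κ := κ) i (X none) = X none := by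
  simp [fiberRestrict]

theorem fiberRestrict_X_some_self (i : α) (j : κ i) :
    fiberRestrict (R := R) i (X (some ⟨i, j⟩)) = X (some j) := by
  simp [fiberRestrict]

theorem fiberRestrict_X_some_of_ne {i l : α} (h : l ≠ i) (j : κ l) :
    fiberRestrict (R := R) i (X (some ⟨l, j⟩)) = 0 := by
  simp [fiberRestrict, h]

theorem fiberRestrict_aeval_X_none (i : α) (c : Polynomial R) :
    fiberRestrict (R := R) (κ := κ) i (Polynomial.aeval (X none) c) =
      Polynomial.aeval (X none) c := by
  rw [← Polynomial.aeval_algHom_apply, fiberRestrict_X_none]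

end MvPolynomial

theorem statement5_general (K : Type*) [Field K] [CharZero K]
    (s : ℕ) (r : Fin s → ℕ) (hr : ∀ l, 1 ≤ r l) (i : Fin s)
    (a : Fin s → Polynomial K) (b : (l : Fin s) → Fin (r l) → Polynomial K)
    (hb : ∀ l : Fin s, l ≠ i → ∀ j : Fin (r l), b l j = 0)
    (D : Derivation K (MvPolynomial (Option (Σ l : Fin s, Fin (r l))) K)
      (MvPolynomial (Option (Σ l : Fin s, Fin (r l))) K))
    (hDx : D (X none) = 1)
    (hDy : ∀ (l : Fin s) (j : Fin (r l)),
      D (X (some ⟨l, j⟩)) =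
        Polynomial.aeval (X none) (a l) * X (some ⟨l, j⟩)
          + Polynomial.aeval (X none) (b l j))
    (hMZ : IsMathieuZhao K (LinearMap.range D.toLinearMap)) :
    ∃ c : K, a i = Polynomial.C c := by
  by_contra hconst
  have ha : 0 < (a i).natDegree := Nat.pos_of_ne_zero fun h => by
    obtain ⟨c, hc⟩ := Polynomial.natDegree_eq_zero.mp h
    exact hconst ⟨c, hc.symm⟩
  set j₀ : Fin (r i) := ⟨0, hr i⟩
  obtain ⟨F, hF⟩ : X (some ⟨i, j₀⟩) ∈ LinearMap.range D.toLinearMap := by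
    rw [hMZ.eq_top_of_one_mem ⟨X none, hDx⟩]
    trivial
  have hcomm : ∀ p, fiberRestrict i (D p) = affineDerivation (a i) (b i) (fiberRestrict i p) :=
    algHom_apply_derivation_of_forall_X _ _ _ <| by
      rintro (_ | ⟨l, j⟩)
      · rw [hDx, map_one, fiberRestrict_X_none, affineDerivation_X_none]
      · by_cases hl : l = i
        · subst hl
          rw [hDy, map_add, map_mul, fiberRestrict_aeval_X_none, fiberRestrict_aeval_X_none,
            fiberRestrict_X_some_self, affineDerivation_X_some]
        · rw [hDy, hb l hl, map_add, map_mul, fiberRestrict_X_some_of_ne hl, map_zero, map_zero,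
            mul_zero, add_zero, map_zero]
  have hF' : D F = X (some ⟨i, j₀⟩) := hF
  apply affineDerivation_apply_ne_X_some ha (b i) (fiberRestrict i F) j₀
  rw [← hcomm, hF', fiberRestrict_X_some_self]

/-- For `D = ∂ₓ + Σⱼ (aᵢ(x) yᵢⱼ + bᵢⱼ(x)) ∂ᵢⱼ + Σ_{l ≠ i} Σⱼ aₗ(x) yₗⱼ ∂ₗⱼ`
(the `b`'s vanish away from the fixed index `i`):
if `Im D` is a Mathieu–Zhao space, then `aᵢ(x)` is a constant. -/
theorem statement5 (K : Type*) [Field K] [CharZero K]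
    (s : ℕ) (hs : 1 ≤ s) (r : Fin s → ℕ) (hr : ∀ l, 1 ≤ r l) (i : Fin s)
    (a : Fin s → Polynomial K) (b : (l : Fin s) → Fin (r l) → Polynomial K)
    (hb : ∀ l : Fin s, l ≠ i → ∀ j : Fin (r l), b l j = 0)
    (D : Derivation K (MvPolynomial (Option (Σ l : Fin s, Fin (r l))) K)
      (MvPolynomial (Option (Σ l : Fin s, Fin (r l))) K))
    (hDx : D (X none) = 1)
    (hDy : ∀ (l : Fin s) (j : Fin (r l)),
      D (X (some ⟨l, j⟩)) =
        Polynomial.aeval (X none) (a l) * X (some ⟨l, j⟩)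
          + Polynomial.aeval (X none) (b l j))
    (hMZ : IsMathieuZhao K (LinearMap.range D.toLinearMap)) :
    ∃ c : K, a i = Polynomial.C c :=
  statement5_general K s r hr i a b hb D hDx hDy hMZ
end

section
/- Let K be a field of characteristic zero, n ≥ 2, and let D = ∂_{x_1} + Σ_{i=2}^{n} (a_i·x_i + b_i)·∂_{x_i} be the K-derivation of K[x_1,…,x_n] with a_i, b_i ∈ K[x_1,…,x_{i-1}] for each i. If a_n has degree at least 1 in the variable x_{n-1}, then Im D = D(K[x_1,…,x_n]) is not a Mathieu–Zhao space of K[x_1,…,x_n]. -/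
/-!
Since `D x₁ = 1`, the constant `1` and all its powers lie in `Im D`; the Mathieu–Zhao property
with `a = 1`, `b = xₙ` would then put `xₙ` in `Im D`. But `xₙ ∉ Im D`. The commutator
`[∂ₙ, D]` equals `aₙ ∂ₙ`, so `∂ₙᵏ (D f) = D (∂ₙᵏ f) + k aₙ ∂ₙᵏ f`. If `D f = xₙ` and
`d = deg_{xₙ} f`, then `g = ∂ₙᵈ f` is nonzero, free of `xₙ`, and `d aₙ g = ∂ₙᵈ xₙ - D g`
(for `d = 0`, `k = 1` already gives `1 = 0`). On polynomials free of `xₙ`, `D` does not raise the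
degree in `x_{n-1}`, whereas multiplying by `d aₙ` raises it by `deg_{x_{n-1}} aₙ ≥ 1`.
-/

open MvPolynomial

namespace MvPolynomial

section DegreeOf

variable {R σ : Type*} [CommSemiring R] {i : σ} {f : MvPolynomial σ R}

theorem add_single_mem_support_of_mem_support_pderiv {u : σ →₀ ℕ}
    (hu : u ∈ (pderiv i f).support) : u + Finsupp.single i 1 ∈ f.support := by
  rw [mem_support_iff, coeff_pderiv] at hu
  exact mem_support_iff.2 (left_ne_zero_of_mul hu)

theorem degreeOf_pderiv_le (j : σ) : degreeOf j (pderiv i f) ≤ degreeOf j f :=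
  degreeOf_le_iff.2 fun u hu =>
    (by simp : u j ≤ (u + Finsupp.single i 1 : σ →₀ ℕ) j).trans
      (monomial_le_degreeOf j (add_single_mem_support_of_mem_support_pderiv hu))

theorem degreeOf_iterate_pderiv_le (j : σ) (k : ℕ) :
    degreeOf j ((pderiv i)^[k] f) ≤ degreeOf j f := by
  induction k with
  | zero => rfl
  | succ k ih =>
    rw [Function.iterate_succ_apply']
    exact (degreeOf_pderiv_le j).trans ih

theorem degreeOf_pderiv_self_le : degreeOf i (pderiv i f) ≤ degreeOf i f - 1 :=
  degreeOf_le_iff.2 fun u hu => by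
    have := monomial_le_degreeOf i (add_single_mem_support_of_mem_support_pderiv hu)
    simp only [Finsupp.add_apply, Finsupp.single_eq_same] at this
    omega

theorem pderiv_eq_zero_of_degreeOf_eq_zero (h : degreeOf i f = 0) : pderiv i f = 0 :=
  pderiv_eq_zero_of_notMem_vars (by rwa [mem_vars_iff_degreeOf_ne_zero, not_not])

theorem exists_mem_support_apply_eq_degreeOf (hf : f ≠ 0) :
    ∃ s ∈ f.support, s i = degreeOf i f := by
  obtain ⟨s, hs, hsi⟩ := Finset.exists_mem_eq_sup _ (support_nonempty.2 hf) fun s => s i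
  exact ⟨s, hs, by rw [degreeOf_eq_sup, hsi]⟩

theorem degreeOf_mul_X_add_le_one {c e : MvPolynomial σ R} (hc : i ∉ c.vars) (he : i ∉ e.vars) :
    degreeOf i (c * X i + e) ≤ 1 := by
  rw [mem_vars_iff_degreeOf_ne_zero, not_not] at hc he
  refine (degreeOf_add_le i _ _).trans (max_le ?_ (he.trans_le zero_le_one))
  simpa [hc] using degreeOf_mul_X_self i c

variable [NoZeroDivisors R] [CharZero R]

theorem coeff_pderiv_tsub_single_ne_zero {s : σ →₀ ℕ} (hs : s ∈ f.support) (hsi : s i ≠ 0) :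
    coeff (s - Finsupp.single i 1) (pderiv i f) ≠ 0 := by
  have hle : Finsupp.single i 1 ≤ s := Finsupp.single_le_iff.2 (Nat.one_le_iff_ne_zero.2 hsi)
  rw [coeff_pderiv, tsub_add_cancel_of_le hle]
  exact mul_ne_zero (mem_support_iff.1 hs) (Nat.cast_add_one_ne_zero _)

theorem pderiv_ne_zero_of_degreeOf_ne_zero (h : degreeOf i f ≠ 0) : pderiv i f ≠ 0 := by
  obtain ⟨s, hs, hsi⟩ :=
    exists_mem_support_apply_eq_degreeOf (i := i) (ne_zero_of_degreeOf_ne_zero h)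
  exact fun h0 => coeff_pderiv_tsub_single_ne_zero hs (hsi ▸ h) (by rw [h0, coeff_zero])

theorem degreeOf_pderiv_self : degreeOf i (pderiv i f) = degreeOf i f - 1 := by
  refine le_antisymm degreeOf_pderiv_self_le ?_
  rcases eq_or_ne (degreeOf i f) 0 with h | h
  · simp [h]
  obtain ⟨s, hs, hsi⟩ :=
    exists_mem_support_apply_eq_degreeOf (i := i) (ne_zero_of_degreeOf_ne_zero h)
  have := monomial_le_degreeOf i (mem_support_iff.2 (coeff_pderiv_tsub_single_ne_zero hs (hsi ▸ h)))
  simpa [hsi] using this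

theorem degreeOf_iterate_pderiv_self (k : ℕ) :
    degreeOf i ((pderiv i)^[k] f) = degreeOf i f - k := by
  induction k with
  | zero => rfl
  | succ k ih => rw [Function.iterate_succ_apply', degreeOf_pderiv_self, ih]; omega

theorem iterate_pderiv_ne_zero (hf : f ≠ 0) {k : ℕ} (hk : k ≤ degreeOf i f) :
    (pderiv i)^[k] f ≠ 0 := by
  cases k with
  | zero => exact hf
  | succ k =>
    rw [Function.iterate_succ_apply']
    exact pderiv_ne_zero_of_degreeOf_ne_zero (by rw [degreeOf_iterate_pderiv_self]; omega)

end DegreeOf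

section Derivation

variable {R σ : Type*} [CommSemiring R]

theorem derivation_eq_sum_pderiv_smul [Fintype σ] {A : Type*} [AddCommMonoid A] [Module R A]
    [Module (MvPolynomial σ R) A] [IsScalarTower R (MvPolynomial σ R) A]
    (D : Derivation R (MvPolynomial σ R) A) (f : MvPolynomial σ R) :
    D f = ∑ i, pderiv i f • D (X i) := by
  classical
  induction f using MvPolynomial.induction_on with
  | C r => simp [derivation_C]
  | add f g hf hg => simp [hf, hg, add_smul, Finset.sum_add_distrib]
  | mul_X f j h =>
    simp [Derivation.leibniz, h, pderiv_X, Pi.single_apply, add_smul, Finset.sum_add_distrib,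
      Finset.smul_sum, smul_smul]

theorem degreeOf_derivation_apply_le [Fintype σ]
    (D : Derivation R (MvPolynomial σ R) (MvPolynomial σ R)) {p : σ} {g : MvPolynomial σ R}
    (hp : degreeOf p (D (X p)) ≤ 1) (hg : ∀ i ∈ g.vars, i ≠ p → p ∉ (D (X i)).vars) :
    degreeOf p (D g) ≤ degreeOf p g := by
  rw [derivation_eq_sum_pderiv_smul D g]
  refine (degreeOf_sum_le p _ _).trans (Finset.sup_le fun i _ => ?_)
  rcases eq_or_ne (pderiv i g) 0 with h0 | h0
  · simp [h0]
  rw [smul_eq_mul]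
  refine (degreeOf_mul_le p _ _).trans ?_
  by_cases hip : i = p
  · subst hip
    have : degreeOf i g ≠ 0 := mt pderiv_eq_zero_of_degreeOf_eq_zero h0
    have := degreeOf_pderiv_self_le (i := i) (f := g)
    omega
  · have hDX := hg i (by_contra fun hi => h0 (pderiv_eq_zero_of_notMem_vars hi)) hip
    rw [mem_vars_iff_degreeOf_ne_zero, not_not] at hDX
    simpa [hDX] using degreeOf_pderiv_le (i := i) (f := g) p

theorem derivation_X_mem_supported_Iic [Nontrivial R] [Preorder σ]
    {D : Derivation R (MvPolynomial σ R) (MvPolynomial σ R)} {a b : σ → MvPolynomial σ R} {z : σ}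
    (ha : ∀ i, a i ∈ supported R {j | j < i}) (hb : ∀ i, b i ∈ supported R {j | j < i})
    (hDz : D (X z) = 1) (hDi : ∀ i, i ≠ z → D (X i) = a i * X i + b i) (i : σ) :
    D (X i) ∈ supported R (Set.Iic i) := by
  by_cases hiz : i = z
  · rw [hiz, hDz]
    exact one_mem _
  have hlt : supported R {j | j < i} ≤ supported R (Set.Iic i) := supported_mono fun _ => le_of_lt
  rw [hDi i hiz]
  exact add_mem (mul_mem (hlt (ha i)) (X_mem_supported.2 le_rfl)) (hlt (hb i))

end Derivation

theorem lie_pderiv_eq_smul_pderiv {R σ : Type*} [CommRing R]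
    (D : Derivation R (MvPolynomial σ R) (MvPolynomial σ R))
    {m : σ} (h : ∀ i ≠ m, m ∉ (D (X i)).vars) :
    ⁅(pderiv m : Derivation R (MvPolynomial σ R) (MvPolynomial σ R)), D⁆ =
      pderiv m (D (X m)) • pderiv m := by
  classical
  refine derivation_ext fun i => ?_
  rw [Derivation.commutator_apply, Derivation.smul_apply, pderiv_X]
  by_cases him : i = m
  · subst him; simp
  · simp [him, pderiv_eq_zero_of_notMem_vars (h i him)]

end MvPolynomial

theorem Derivation.iterate_apply_of_lie_eq_smul {R A : Type*} [CommRing R] [CommRing A]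
    [Algebra R A] {δ D : Derivation R A A} {c : A} (hc : δ c = 0) (h : ⁅δ, D⁆ = c • δ)
    (k : ℕ) (f : A) : δ^[k] (D f) = D (δ^[k] f) + k * c * δ^[k] f := by
  have hδD : ∀ g, δ (D g) = D (δ g) + c * δ g := fun g => by
    have := congr($h g)
    rw [Derivation.commutator_apply, Derivation.smul_apply, smul_eq_mul] at this
    exact sub_eq_iff_eq_add'.1 this
  induction k with
  | zero => simp
  | succ k ih =>
    rw [Function.iterate_succ_apply', ih, map_add, hδD, Derivation.leibniz, Derivation.leibniz,
      hc, Function.iterate_succ_apply', map_natCast]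
    push_cast
    ring

namespace MvPolynomial

variable {R σ : Type*} [CommRing R] [IsDomain R] [CharZero R] [Fintype σ]
  {D : Derivation R (MvPolynomial σ R) (MvPolynomial σ R)} {m p : σ} {c e : MvPolynomial σ R}

theorem X_notMem_range_derivation (hpm : p ≠ m) (hm : ∀ i ≠ m, m ∉ (D (X i)).vars)
    (hXm : D (X m) = c * X m + e) (hc : m ∉ c.vars) (he : m ∉ e.vars)
    (hp : ∀ i, i ≠ p → i ≠ m → p ∉ (D (X i)).vars) (hXp : degreeOf p (D (X p)) ≤ 1)
    (hcp : 1 ≤ degreeOf p c) :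
    X m ∉ LinearMap.range D.toLinearMap := by
  rintro ⟨f, hf : D f = X m⟩
  have hlie : ⁅(pderiv m : Derivation R (MvPolynomial σ R) (MvPolynomial σ R)), D⁆ =
      c • pderiv m := by
    rw [lie_pderiv_eq_smul_pderiv D hm, hXm]
    simp [pderiv_eq_zero_of_notMem_vars hc, pderiv_eq_zero_of_notMem_vars he]
  have hiter := Derivation.iterate_apply_of_lie_eq_smul (pderiv_eq_zero_of_notMem_vars hc) hlie
  rcases eq_or_ne (degreeOf m f) 0 with hd | hd
  · have := hiter 1 f
    simp [hf, pderiv_eq_zero_of_degreeOf_eq_zero hd] at this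
  set d := degreeOf m f
  set g := (pderiv m)^[d] f
  have hf0 : f ≠ 0 := fun h0 => X_ne_zero m (by rw [← hf, h0, map_zero])
  have hg : g ≠ 0 := iterate_pderiv_ne_zero hf0 le_rfl
  have hDg : degreeOf p (D g) ≤ degreeOf p g := by
    refine degreeOf_derivation_apply_le D hXp fun i hi hip => hp i hip ?_
    rintro rfl
    rw [mem_vars_iff_degreeOf_ne_zero, degreeOf_iterate_pderiv_self] at hi
    exact hi (Nat.sub_self d)
  have hXm0 : degreeOf p ((pderiv m)^[d] (X m)) = 0 :=
    Nat.le_zero.1 ((degreeOf_iterate_pderiv_le p d).trans (degreeOf_X_of_ne (R := R) hpm).le)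
  have hcg : degreeOf p ((d : MvPolynomial σ R) * c * g) = degreeOf p c + degreeOf p g := by
    have hc0 : c ≠ 0 := ne_zero_of_degreeOf_ne_zero (Nat.one_le_iff_ne_zero.1 hcp)
    rw [← map_natCast C, mul_assoc, degreeOf_C_mul _ _ (mem_nonZeroDivisors_of_ne_zero
      (Nat.cast_ne_zero.2 hd)), degreeOf_mul_eq hc0 hg]
  have hsub : (d : MvPolynomial σ R) * c * g = (pderiv m)^[d] (X m) - D g := by
    rw [← hf, hiter]; ring
  have := degreeOf_sub_le p ((pderiv m)^[d] (X m)) (D g)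
  rw [← hsub, hcg, hXm0] at this
  omega

end MvPolynomial

/-- For `D = ∂_{x₁} + Σ_{i=2}^{n} (aᵢ xᵢ + bᵢ) ∂_{xᵢ}` with
`aᵢ, bᵢ ∈ K[x₁, …, x_{i-1}]`: if `deg_{x_{n-1}} aₙ ≥ 1`, then `Im D` is not a
Mathieu–Zhao space of `K[x₁, …, xₙ]`. (Variables are indexed by `Fin n`,
with `X ⟨0, _⟩ = x₁` and `X ⟨n-1, _⟩ = xₙ`.) -/
theorem statement6 (K : Type*) [Field K] [CharZero K]
    (n : ℕ) (hn : 2 ≤ n)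
    (a b : Fin n → MvPolynomial (Fin n) K)
    (ha : ∀ i : Fin n, a i ∈ supported K {j : Fin n | j < i})
    (hb : ∀ i : Fin n, b i ∈ supported K {j : Fin n | j < i})
    (D : Derivation K (MvPolynomial (Fin n) K) (MvPolynomial (Fin n) K))
    (hD1 : D (X (⟨0, by omega⟩ : Fin n)) = 1)
    (hDi : ∀ i : Fin n, i ≠ ⟨0, by omega⟩ → D (X i) = a i * X i + b i)
    (hdeg : 1 ≤ degreeOf (⟨n - 2, by omega⟩ : Fin n) (a ⟨n - 1, by omega⟩)) :
    ¬ IsMathieuZhao K (LinearMap.range D.toLinearMap) := by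
  intro hMZ
  have hone : (1 : MvPolynomial (Fin n) K) ∈ LinearMap.range D.toLinearMap := ⟨X _, hD1⟩
  obtain ⟨N, hN⟩ := hMZ 1 (X ⟨n - 1, by omega⟩) fun k _ => by simpa using hone
  have hvars : ∀ i j, j ∈ (D (X i)).vars → j ≤ i := fun i =>
    mem_supported.1 (derivation_X_mem_supported_Iic ha hb hD1 hDi i)
  have ha_free : ∀ i, i ∉ (a i).vars := fun i h => lt_irrefl i (mem_supported.1 (ha i) h)
  have hb_free : ∀ i, i ∉ (b i).vars := fun i h => lt_irrefl i (mem_supported.1 (hb i) h)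
  refine X_notMem_range_derivation (m := ⟨n - 1, _⟩) (p := ⟨n - 2, _⟩)
    (by grind) (fun i hi h => by grind [hvars i _ h]) (hDi _ (by grind)) (ha_free _) (hb_free _)
    (fun i hi hi' h => by grind [hvars i _ h]) ?_ hdeg (by simpa using hN N le_rfl)
  by_cases hpz : (⟨n - 2, by omega⟩ : Fin n) = ⟨0, by omega⟩
  · rw [hpz, hD1, degreeOf_one]
    exact zero_le_one
  · rw [hDi _ hpz]
    exact degreeOf_mul_X_add_le_one (ha_free _) (hb_free _)
end

section
/- Let K be a field of characteristic zero and let D = ∂_{x_1} + (a_2·x_2 + b_2)·∂_{x_2} + b_3·∂_{x_3} be the K-derivation of K[x_1,x_2,x_3] with a_2, b_2 ∈ K[x_1] and b_3 ∈ K[x_1,x_2]. Write b_3 = b_3^{(v)}·x_2^v + ⋯ + b_3^{(1)}·x_2 + b_3^{(0)} with each b_3^{(j)} ∈ K[x_1], and assume the leading coefficient b_3^{(v)} is a nonzero constant, b_3^{(v)} ∈ K \ {0}. Then Im D = D(K[x_1,x_2,x_3]) is a Mathieu–Zhao space of K[x_1,x_2,x_3] if and only if a_2 ∈ K, i.e.,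 a_2 is a constant polynomial. -/
set_option linter.unusedSectionVars false
set_option maxHeartbeats 1000000



namespace S12
open Polynomial

section lift
variable {K : Type*} [Field K] [CharZero K]
variable {S : Type*} [CommRing S] [Algebra K S]

noncomputable def liftDfun (d : S →ₗ[K] S) (p : Polynomial S) : Polynomial S :=
  p.sum fun n a => C (d a) * X ^ n

lemma liftDfun_coeff (d : S →ₗ[K] S) (p : Polynomial S) (k : ℕ) :
    (liftDfun d p).coeff k = d (p.coeff k) := by
  unfold liftDfun
  rw [Polynomial.sum, finset_sum_coeff]
  simp only [coeff_C_mul, coeff_X_pow, mul_ite, mul_one, mul_zero]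
  rw [Finset.sum_ite_eq p.support k (fun n => d (p.coeff n))]
  by_cases h : k ∈ p.support
  · simp [h]
  · simp [h, Polynomial.notMem_support_iff.1 h]

noncomputable def liftD (d : S →ₗ[K] S) : Polynomial S →ₗ[K] Polynomial S where
  toFun := liftDfun d
  map_add' p q := by ext k; simp [liftDfun_coeff]
  map_smul' c p := by ext k; simp [liftDfun_coeff]

@[simp] lemma liftD_coeff (d : S →ₗ[K] S) (p : Polynomial S) (k : ℕ) :
    (liftD d p).coeff k = d (p.coeff k) := liftDfun_coeff d p k

lemma liftD_C (d : S →ₗ[K] S) (a : S) : liftD d (C a) = C (d a) := by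
  ext k
  simp only [liftD_coeff, coeff_C]
  rw [apply_ite d, map_zero]

lemma liftD_C_mul_X_pow (d : S →ₗ[K] S) (a : S) (n : ℕ) :
    liftD d (C a * X ^ n) = C (d a) * X ^ n := by
  ext k
  simp only [liftD_coeff, coeff_C_mul, coeff_X_pow, mul_ite, mul_one, mul_zero]
  rw [apply_ite d, map_zero]

lemma liftD_leibniz (d : S →ₗ[K] S) (hd : ∀ a b : S, d (a * b) = d a * b + a * d b)
    (p q : Polynomial S) : liftD d (p * q) = liftD d p * q + p * liftD d q := by
  ext k
  simp only [liftD_coeff, coeff_add, coeff_mul, map_sum, liftD_coeff]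
  rw [← Finset.sum_add_distrib]
  exact Finset.sum_congr rfl fun x _ => hd _ _

end lift

variable (K : Type*) [Field K] [CharZero K]

local notation "A" => Polynomial K
local notation "B" => Polynomial (Polynomial K)
local notation "T" => Polynomial (Polynomial (Polynomial K))
local notation "R" => MvPolynomial (Fin 3) K

noncomputable def d1B : B →ₗ[K] B := liftD (derivative : A →ₗ[K] A)
noncomputable def d1T : T →ₗ[K] T := liftD (d1B K)
noncomputable def d2T : T →ₗ[K] T := liftD ((derivative : B →ₗ[A] B).restrictScalars K)

lemma d1B_leibniz (a b : B) : d1B K (a * b) = d1B K a * b + a * d1B K b :=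
  liftD_leibniz _ (fun a b => derivative_mul) a b

lemma d1T_leibniz (a b : T) : d1T K (a * b) = d1T K a * b + a * d1T K b :=
  liftD_leibniz _ (d1B_leibniz K) a b

lemma d2T_leibniz (a b : T) : d2T K (a * b) = d2T K a * b + a * d2T K b :=
  liftD_leibniz _ (fun a b => derivative_mul) a b

-- the algebra isomorphism
noncomputable def ΦA : A →ₐ[K] R := Polynomial.aeval (MvPolynomial.X 0)
noncomputable def ΦB : B →ₐ[K] R := Polynomial.aevalTower (ΦA K) (MvPolynomial.X 1)
noncomputable def ΦT : T →ₐ[K] R := Polynomial.aevalTower (ΦB K) (MvPolynomial.X 2)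
noncomputable def Ψ : R →ₐ[K] T :=
  MvPolynomial.aeval ![C (C X), C X, (X : T)]

lemma ΦT_comp_C : (ΦT K).comp CAlgHom = ΦB K := by
  apply AlgHom.ext; intro b
  simp [ΦT, Polynomial.aevalTower_C, CAlgHom]

lemma ΦB_comp_C : (ΦB K).comp CAlgHom = ΦA K := by
  apply AlgHom.ext; intro b
  simp [ΦB, Polynomial.aevalTower_C, CAlgHom]

lemma comp1 : (Ψ K).comp (ΦT K) = AlgHom.id K T := by
  apply Polynomial.algHom_ext'
  · rw [AlgHom.comp_assoc, ΦT_comp_C]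
    apply Polynomial.algHom_ext'
    · rw [AlgHom.comp_assoc, ΦB_comp_C]
      apply Polynomial.algHom_ext
      simp [ΦA, Ψ, CAlgHom]
    · simp [ΦB, Ψ, CAlgHom]
  · simp [ΦT, Ψ]

lemma comp2 : (ΦT K).comp (Ψ K) = AlgHom.id K R := by
  apply MvPolynomial.algHom_ext
  intro i
  fin_cases i <;>
    simp [Ψ, ΦT, ΦB, ΦA, Polynomial.aevalTower_C, Polynomial.aevalTower_X]

noncomputable def φ : R ≃ₐ[K] T := AlgEquiv.ofAlgHom (Ψ K) (ΦT K) (comp1 K) (comp2 K)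

@[simp] lemma φ_X0 : φ K (MvPolynomial.X 0) = C (C X) := by
  simp [φ, Ψ]
@[simp] lemma φ_X1 : φ K (MvPolynomial.X 1) = C X := by
  simp [φ, Ψ]
@[simp] lemma φ_X2 : φ K (MvPolynomial.X 2) = X := by
  simp [φ, Ψ]
@[simp] lemma φ_C (c : K) : φ K (MvPolynomial.C c) = C (C (C c)) := by
  have : MvPolynomial.C (σ := Fin 3) c = algebraMap K R c := rfl
  rw [this, AlgEquiv.commutes]
  rfl

end S12

namespace S12
open Polynomial

variable (K : Type*) [Field K] [CharZero K]

local notation "A" => Polynomial K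
local notation "B" => Polynomial (Polynomial K)
local notation "T" => Polynomial (Polynomial (Polynomial K))
local notation "R" => MvPolynomial (Fin 3) K

noncomputable def Lop (u bt : B) (g : T) : T :=
  d1T K g + C u * d2T K g + C bt * derivative g

lemma Lop_add (u bt : B) (g h : T) :
    Lop K u bt (g + h) = Lop K u bt g + Lop K u bt h := by
  simp only [Lop, map_add, derivative_add]; ring

lemma Lop_leibniz (u bt : B) (g h : T) :
    Lop K u bt (g * h) = Lop K u bt g * h + g * Lop K u bt h := by
  simp only [Lop, d1T_leibniz, d2T_leibniz, derivative_mul]; ring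

lemma d1B_X : d1B K X = 0 := by
  rw [d1B, show (X : B) = C 1 * X ^ 1 by simp, liftD_C_mul_X_pow]; simp

lemma d1T_CX : d1T K (C X) = 0 := by
  rw [d1T, liftD_C, d1B_X, map_zero]

lemma d2T_CX : d2T K (C X) = 1 := by
  rw [d2T, liftD_C]; simp

lemma d1T_X : d1T K X = 0 := by
  rw [d1T, show (X : T) = C 1 * X ^ 1 by simp, liftD_C_mul_X_pow,
    show (1 : B) = C 1 from rfl, d1B, liftD_C]
  simp

lemma d2T_X : d2T K X = 0 := by
  rw [d2T, show (X : T) = C 1 * X ^ 1 by simp, liftD_C_mul_X_pow]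
  simp

lemma d1T_CC (b : Polynomial K) : d1T K (C (C b)) = C (C (Polynomial.derivative b)) := by
  rw [d1T, liftD_C, d1B, liftD_C]

lemma supported_char {p : MvPolynomial (Fin 3) K}
    (hp : p ∈ MvPolynomial.supported K ({0} : Set (Fin 3))) :
    ∃ α : A, φ K p = C (C α) := by
  have hp' : p ∈ Algebra.adjoin K (MvPolynomial.X '' ({0} : Set (Fin 3))) := hp
  have h2 : φ K p ∈ (Algebra.adjoin K (MvPolynomial.X '' ({0} : Set (Fin 3)))).map
      (φ K).toAlgHom := Subalgebra.mem_map.2 ⟨p, hp', rfl⟩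
  rw [AlgHom.map_adjoin] at h2
  have himg : (⇑(φ K).toAlgHom '' (MvPolynomial.X '' ({0} : Set (Fin 3))))
      = {(C (C X) : T)} := by
    rw [Set.image_image, Set.image_singleton]
    simp
  rw [himg] at h2
  have hle : Algebra.adjoin K ({(C (C X) : T)}) ≤
      ((CAlgHom.comp CAlgHom : A →ₐ[K] T)).range := by
    apply Algebra.adjoin_le
    rintro x rfl
    exact ⟨X, rfl⟩
  obtain ⟨α, hα⟩ := hle h2
  exact ⟨α, hα ▸ rfl⟩

theorem transport (a2 b2 b3 : MvPolynomial (Fin 3) K) (α β : A) (bt : B)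
    (hα : φ K a2 = C (C α)) (hβ : φ K b2 = C (C β)) (hbt : φ K b3 = C bt)
    (D : Derivation K (MvPolynomial (Fin 3) K) (MvPolynomial (Fin 3) K))
    (hD1 : D (MvPolynomial.X 0) = 1)
    (hD2 : D (MvPolynomial.X 1) = a2 * MvPolynomial.X 1 + b2)
    (hD3 : D (MvPolynomial.X 2) = b3)
    (f : MvPolynomial (Fin 3) K) :
    φ K (D f) = Lop K (C α * X + C β) bt (φ K f) := by
  have hgen : ∀ i : Fin 3, φ K (D (MvPolynomial.X i)) =
      Lop K (C α * X + C β) bt (φ K (MvPolynomial.X i)) := by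
    intro i
    fin_cases i
    · show φ K (D (MvPolynomial.X 0)) = Lop K (C α * X + C β) bt (φ K (MvPolynomial.X 0))
      rw [hD1, φ_X0, map_one]
      simp [Lop, d1T_CC, d2T, liftD_C]
    · show φ K (D (MvPolynomial.X 1)) = Lop K (C α * X + C β) bt (φ K (MvPolynomial.X 1))
      rw [hD2, φ_X1, map_add, map_mul, hα, hβ, φ_X1]
      simp [Lop, d1T_CX, d2T_CX]
    · show φ K (D (MvPolynomial.X 2)) = Lop K (C α * X + C β) bt (φ K (MvPolynomial.X 2))
      rw [hD3, φ_X2, hbt]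
      simp [Lop, d1T_X, d2T_X]
  induction f using MvPolynomial.induction_on with
  | C a =>
    rw [show MvPolynomial.C a = algebraMap K (MvPolynomial (Fin 3) K) a from rfl,
      Derivation.map_algebraMap, map_zero]
    have : φ K (algebraMap K (MvPolynomial (Fin 3) K) a) = C (C (C a)) := φ_C K a
    rw [this]
    simp [Lop, d1T_CC, d2T, liftD_C]
  | add p q hp hq =>
    rw [map_add, map_add, map_add, hp, hq, Lop_add]
  | mul_X p i hp =>
    rw [Derivation.leibniz, smul_eq_mul, smul_eq_mul, map_add, map_mul, map_mul,
      map_mul, Lop_leibniz, hp, hgen i]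
    ring

end S12

namespace S12
open Polynomial

section main
variable (K : Type*) [Field K] [CharZero K]

local notation "A" => Polynomial K
local notation "B" => Polynomial (Polynomial K)
local notation "T" => Polynomial (Polynomial (Polynomial K))
local notation "R" => MvPolynomial (Fin 3) K

noncomputable def L12 (α β : A) (h : B) : B :=
  d1B K h + (C α * X + C β) * derivative h

lemma L12_coeff (α β : A) (h : B) (j : ℕ) :
    (L12 K α β h).coeff j = derivative (h.coeff j) + α * h.coeff j * (j : A)
      + β * h.coeff (j + 1) * ((j : A) + 1) := by
  have hXdh : (X * derivative h).coeff j = h.coeff j * (j : A) := by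
    cases j with
    | zero => simp [Polynomial.mul_coeff_zero]
    | succ n =>
      rw [mul_comm X, coeff_mul_X, coeff_derivative]
      push_cast; ring
  unfold L12
  rw [coeff_add, d1B, liftD_coeff,
    show (C α * X + C β) * derivative h = C α * (X * derivative h) + C β * derivative h
      from by ring,
    coeff_add, coeff_C_mul, coeff_C_mul, hXdh, coeff_derivative]
  push_cast; ring

lemma L12_coeff_high (α β : A) (h : B) (m : ℕ) (hm : h.natDegree < m) :
    (L12 K α β h).coeff m = 0 := by
  rw [L12_coeff, coeff_eq_zero_of_natDegree_lt hm,
    coeff_eq_zero_of_natDegree_lt (lt_trans hm (Nat.lt_succ_self m))]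
  simp

lemma Lop_coeff (α β : A) (bt : B) (g : T) (k : ℕ) :
    (Lop K (C α * X + C β) bt g).coeff k
      = L12 K α β (g.coeff k) + bt * g.coeff (k + 1) * ((k : B) + 1) := by
  unfold Lop L12
  rw [coeff_add, coeff_add, d1T, liftD_coeff, coeff_C_mul, coeff_C_mul,
    coeff_derivative, d2T, liftD_coeff]
  simp only [LinearMap.restrictScalars_apply]
  push_cast
  ring

/-- key degree lemma: for `α` nonconstant and `j ≥ 1`,
`f' + α f j = s` with `s` of degree `0` forces `f = 0` and `s = 0`. -/
lemma keyA (α : A) (hd : 1 ≤ α.natDegree) (f s : A) (j : ℕ) (hj : 1 ≤ j)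
    (hs : s.natDegree = 0) (heq : derivative f + α * f * (j : A) = s) :
    f = 0 ∧ s = 0 := by
  by_cases hf : f = 0
  · subst hf; simp at heq; exact ⟨rfl, heq.symm⟩
  exfalso
  have hα0 : α ≠ 0 := fun h => by simp [h] at hd
  set idx := α.natDegree + f.natDegree with hidx
  have h1 : (derivative f).coeff idx = 0 := by
    apply coeff_eq_zero_of_natDegree_lt
    have := Polynomial.natDegree_derivative_le f
    omega
  have h2 : (α * f * (j : A)).coeff idx = α.leadingCoeff * f.leadingCoeff * (j : K) := by
    rw [show ((j : ℕ) : A) = C ((j : ℕ) : K) from (Polynomial.C_eq_natCast _).symm,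
      coeff_mul_C, coeff_mul_degree_add_degree]
  have h3 : s.coeff idx = 0 := by
    apply coeff_eq_zero_of_natDegree_lt
    omega
  have h4 := congrArg (fun p => Polynomial.coeff p idx) heq
  simp only [coeff_add, h1, h2, h3, zero_add] at h4
  have h5 : α.leadingCoeff ≠ 0 := Polynomial.leadingCoeff_ne_zero.2 hα0
  have h6 : f.leadingCoeff ≠ 0 := Polynomial.leadingCoeff_ne_zero.2 hf
  have h7 : ((j : ℕ) : K) ≠ 0 := Nat.cast_ne_zero.2 (by omega)
  exact (mul_ne_zero (mul_ne_zero h5 h6) h7) h4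

lemma L12_C (α β : A) (f : A) : L12 K α β (C f) = C (derivative f) := by
  unfold L12
  rw [d1B, liftD_C, derivative_C]
  ring

lemma L12_zero (α β : A) : L12 K α β 0 = 0 := by
  unfold L12; simp

/-- (L-i') : if `L12 h` is a constant (in `A`), then `h` is a constant. -/
lemma Li' (α β : A) (hd : 1 ≤ α.natDegree) (h : B) (r : A)
    (heq : L12 K α β h = C r) : ∃ f : A, h = C f ∧ derivative f = r := by
  by_cases h0 : h = 0
  · subst h0
    rw [L12_zero] at heq
    exact ⟨0, by simp, by simpa using congrArg (fun p => Polynomial.coeff p 0) heq⟩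
  rcases Nat.eq_zero_or_pos h.natDegree with hw | hw
  · obtain ⟨f, hf⟩ := Polynomial.natDegree_eq_zero.1 hw
    refine ⟨f, hf.symm, ?_⟩
    rw [← hf, L12_C] at heq
    exact Polynomial.C_injective heq
  · exfalso
    set w := h.natDegree with hwdef
    have hcw := congrArg (fun p => Polynomial.coeff p w) heq
    simp only [L12_coeff] at hcw
    rw [coeff_eq_zero_of_natDegree_lt (Nat.lt_succ_self w)] at hcw
    simp only [mul_zero, zero_mul, add_zero] at hcw
    rw [Polynomial.coeff_C, if_neg (by omega)] at hcw
    have := keyA K α hd (h.coeff w) 0 w hw (by simp) (by rw [hcw])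
    exact Polynomial.leadingCoeff_ne_zero.2 h0 this.1

/-- (L-i) : if `L12 h = 0` then `h` is a constant in `K`. -/
lemma Li (α β : A) (hd : 1 ≤ α.natDegree) (h : B)
    (heq : L12 K α β h = 0) : ∃ κ : K, h = C (C κ) := by
  obtain ⟨f, hf, hdf⟩ := Li' K α β hd h 0 (by rw [heq]; simp)
  have := Polynomial.natDegree_eq_zero_of_derivative_eq_zero hdf
  obtain ⟨κ, hκ⟩ := Polynomial.natDegree_eq_zero.1 this
  exact ⟨κ, by rw [hf, ← hκ]⟩

end main

end S12

namespace S12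
open Polynomial

section main2
variable (K : Type*) [Field K] [CharZero K]

local notation "A" => Polynomial K
local notation "B" => Polynomial (Polynomial K)
local notation "T" => Polynomial (Polynomial (Polynomial K))

lemma Lii (α β : A) (hd : 1 ≤ α.natDegree) (bt : B) (v : ℕ) (hv : 1 ≤ v) (c : K)
    (hc : c ≠ 0) (hbtle : bt.natDegree ≤ v) (hbtv : bt.coeff v = C c)
    (m : ℕ) (hm : 1 ≤ m) (κ : K) (h : B)
    (heq : L12 K α β h + bt * C (C κ) * ((m : ℕ) : B) = 0) : κ = 0 := by
  by_contra hκ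
  have hκm : κ * (m : K) ≠ 0 :=
    mul_ne_zero hκ (Nat.cast_ne_zero.2 (by omega))
  have hterm : ∀ n, (bt * C (C κ) * ((m : ℕ) : B)).coeff n
      = bt.coeff n * C (κ * (m : K)) := by
    intro n
    rw [show ((m : ℕ) : B) = C (C ((m : ℕ) : K)) by simp, mul_assoc, ← Polynomial.C_mul,
      ← Polynomial.C_mul, coeff_mul_C]
  have hco : ∀ n, (L12 K α β h).coeff n + bt.coeff n * C (κ * (m : K)) = 0 := by
    intro n
    have h1 := congrArg (fun p => Polynomial.coeff p n) heq
    simp only [coeff_add, coeff_zero] at h1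
    rw [hterm n] at h1
    exact h1
  by_cases h0 : h = 0
  · have h1 := hco v
    rw [h0, L12_zero, coeff_zero, zero_add, hbtv, ← Polynomial.C_mul] at h1
    exact (mul_ne_zero hc hκm) (Polynomial.C_eq_zero.1 h1)
  have hlc : h.coeff h.natDegree ≠ 0 := Polynomial.leadingCoeff_ne_zero.2 h0
  set w := h.natDegree with hw
  rcases lt_trichotomy w v with hlt | heqwv | hgt
  · have h1 := hco v
    rw [L12_coeff_high K α β h v hlt, hbtv, zero_add, ← Polynomial.C_mul] at h1
    exact (mul_ne_zero hc hκm) (Polynomial.C_eq_zero.1 h1)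
  · have h1 := hco v
    rw [L12_coeff, coeff_eq_zero_of_natDegree_lt (show h.natDegree < v + 1 by omega),
      hbtv, ← Polynomial.C_mul] at h1
    simp only [mul_zero, zero_mul, add_zero] at h1
    have hkey := keyA K α hd (h.coeff v) (-(C (c * (κ * (m : K))))) v (by omega)
      (by rw [Polynomial.natDegree_neg, Polynomial.natDegree_C])
      (by linear_combination h1)
    have h2 : (C (c * (κ * (m : K))) : A) = 0 := by
      have := hkey.2; rwa [neg_eq_zero] at this
    exact (mul_ne_zero hc hκm) (Polynomial.C_eq_zero.1 h2)
  · have h1 := hco w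
    rw [L12_coeff, coeff_eq_zero_of_natDegree_lt (show h.natDegree < w + 1 by omega),
      coeff_eq_zero_of_natDegree_lt (show bt.natDegree < w by omega)] at h1
    simp only [mul_zero, zero_mul, add_zero, zero_add] at h1
    have hkey := keyA K α hd (h.coeff w) 0 w (by omega) (by simp) (by linear_combination h1)
    exact hlc hkey.1

lemma Liii (α β : A) (hd : 1 ≤ α.natDegree) (bt : B) (v : ℕ) (hbtle : bt.natDegree ≤ v)
    (h : B) (f1 : A) (heq : L12 K α β h + bt * C f1 = X ^ (v + 1)) : False := by
  have hco : ∀ n, (L12 K α β h).coeff n + bt.coeff n * f1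
      = ((X : B) ^ (v + 1)).coeff n := by
    intro n
    have h1 := congrArg (fun p => Polynomial.coeff p n) heq
    simp only [coeff_add, coeff_mul_C] at h1
    exact h1
  by_cases h0 : h = 0
  · have h1 := hco (v + 1)
    rw [h0, L12_zero, coeff_zero, zero_add,
      coeff_eq_zero_of_natDegree_lt (show bt.natDegree < v + 1 by omega), zero_mul,
      coeff_X_pow, if_pos rfl] at h1
    exact zero_ne_one h1
  have hlc : h.coeff h.natDegree ≠ 0 := Polynomial.leadingCoeff_ne_zero.2 h0
  set w := h.natDegree with hw
  rcases lt_trichotomy w (v + 1) with hlt | heqw | hgt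
  · have h1 := hco (v + 1)
    rw [L12_coeff_high K α β h (v + 1) hlt,
      coeff_eq_zero_of_natDegree_lt (show bt.natDegree < v + 1 by omega), zero_mul,
      coeff_X_pow, if_pos rfl, add_zero] at h1
    exact zero_ne_one h1
  · have h1 := hco (v + 1)
    rw [L12_coeff, coeff_eq_zero_of_natDegree_lt (show h.natDegree < v + 1 + 1 by omega),
      coeff_eq_zero_of_natDegree_lt (show bt.natDegree < v + 1 by omega), zero_mul,
      coeff_X_pow, if_pos rfl, add_zero] at h1
    simp only [mul_zero, zero_mul, add_zero] at h1
    have hkey := keyA K α hd (h.coeff (v + 1)) 1 (v + 1) (by omega)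
      Polynomial.natDegree_one (by linear_combination h1)
    exact one_ne_zero hkey.2
  · have h1 := hco w
    rw [L12_coeff, coeff_eq_zero_of_natDegree_lt (show h.natDegree < w + 1 by omega),
      coeff_eq_zero_of_natDegree_lt (show bt.natDegree < w by omega), zero_mul,
      coeff_X_pow, if_neg (by omega), add_zero] at h1
    simp only [mul_zero, zero_mul, add_zero] at h1
    have hkey := keyA K α hd (h.coeff w) 0 w (by omega) (by simp) (by linear_combination h1)
    exact hlc hkey.1

theorem forward_core (α β : A) (hd : 1 ≤ α.natDegree) (bt : B) (v : ℕ) (c : K)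
    (hc : c ≠ 0) (hbtle : bt.natDegree ≤ v) (hbtv : bt.coeff v = C c)
    (hv0 : v = 0 → bt = C (C c)) (G : T)
    (heq : Lop K (C α * X + C β) bt G = C ((X : B) ^ (v + 1))) : False := by
  have hco : ∀ k, L12 K α β (G.coeff k) + bt * G.coeff (k + 1) * (((k : ℕ) : B) + 1)
      = if k = 0 then (X : B) ^ (v + 1) else 0 := by
    intro k
    have h1 := congrArg (fun p => Polynomial.coeff p k) heq
    rw [Lop_coeff, Polynomial.coeff_C] at h1
    exact h1
  have hchain : ∃ f1 : A, G.coeff 1 = C f1 := by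
    rcases Nat.eq_zero_or_pos v with hv | hv
    · have hbt0 := hv0 hv
      have hch : ∀ t : ℕ, ∀ k, 1 ≤ k → G.natDegree < k + t → ∃ f : A, G.coeff k = C f := by
        intro t
        induction t with
        | zero =>
          intro k hk hlt
          exact ⟨0, by rw [coeff_eq_zero_of_natDegree_lt (by omega)]; simp⟩
        | succ t ih =>
          intro k hk hlt
          obtain ⟨f', hf'⟩ := ih (k + 1) (by omega) (by omega)
          have he := hco k
          rw [if_neg (by omega), hf'] at he
          have hrw : bt * C f' * (((k : ℕ) : B) + 1)
              = C (C c * f' * (((k : ℕ) : A) + 1)) := by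
            rw [hbt0, show (((k : ℕ) : B) + 1) = C ((((k : ℕ) : A) + 1)) by simp,
              ← Polynomial.C_mul, ← Polynomial.C_mul]
          rw [hrw] at he
          have he2 : L12 K α β (G.coeff k) = C (-(C c * f' * (((k : ℕ) : A) + 1))) := by
            rw [Polynomial.C_neg]
            linear_combination he
          obtain ⟨f, hf, _⟩ := Li' K α β hd (G.coeff k) _ he2
          exact ⟨f, hf⟩
      exact hch (G.natDegree + 1) 1 le_rfl (by omega)
    · have hch : ∀ t : ℕ, ∀ k, 1 ≤ k → G.natDegree < k + t →
          ∃ κ : K, G.coeff k = C (C κ) := by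
        intro t
        induction t with
        | zero =>
          intro k hk hlt
          exact ⟨0, by rw [coeff_eq_zero_of_natDegree_lt (by omega)]; simp⟩
        | succ t ih =>
          intro k hk hlt
          obtain ⟨κ', hκ'⟩ := ih (k + 1) (by omega) (by omega)
          have he := hco k
          rw [if_neg (by omega), hκ'] at he
          have hcast : (((k : ℕ) : B) + 1) = (((k + 1 : ℕ)) : B) := by push_cast; ring
          rw [hcast] at he
          have hκ0 := Lii K α β hd bt v hv c hc hbtle hbtv (k + 1) (by omega) κ'
            (G.coeff k) he
          rw [hκ0] at he
          simp only [map_zero, mul_zero, zero_mul, add_zero] at he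
          exact Li K α β hd (G.coeff k) he
      obtain ⟨κ1, hκ1⟩ := hch (G.natDegree + 1) 1 le_rfl (by omega)
      exact ⟨C κ1, hκ1⟩
  obtain ⟨f1, hf1⟩ := hchain
  have he0 := hco 0
  rw [if_pos rfl, hf1, show (((0 : ℕ) : B) + 1) = 1 by simp, mul_one] at he0
  exact Liii K α β hd bt v hbtle (G.coeff 0) f1 he0

end main2

end S12

namespace S12
open Polynomial

section main3
variable (K : Type*) [Field K] [CharZero K]

local notation "A" => Polynomial K
local notation "B" => Polynomial (Polynomial K)
local notation "T" => Polynomial (Polynomial (Polynomial K))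

lemma antider (u : A) : ∃ f : A, derivative f = u := by
  induction u using Polynomial.induction_on' with
  | add p q hp hq =>
    obtain ⟨fp, hfp⟩ := hp; obtain ⟨fq, hfq⟩ := hq
    exact ⟨fp + fq, by rw [derivative_add, hfp, hfq]⟩
  | monomial n a =>
    refine ⟨C (a / ((n : K) + 1)) * X ^ (n + 1), ?_⟩
    rw [derivative_C_mul_X_pow, Nat.add_sub_cancel]
    have hne : ((n : K) + 1) ≠ 0 := by
      have : ((n : K) + 1) = ((n + 1 : ℕ) : K) := by push_cast; ring
      rw [this]; exact Nat.cast_ne_zero.2 (by omega)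
    have : a / ((n : K) + 1) * ((n + 1 : ℕ) : K) = a := by
      push_cast; field_simp
    rw [this, Polynomial.C_mul_X_pow_eq_monomial]

lemma ode (e : K) (u : A) : ∃ f : A, derivative f + C e * f = u := by
  by_cases he : e = 0
  · obtain ⟨f, hf⟩ := antider K u
    exact ⟨f, by rw [he]; simp [hf]⟩
  suffices h : ∀ n : ℕ, ∀ u : A, u.natDegree ≤ n → ∃ f, derivative f + C e * f = u from
    h u.natDegree u le_rfl
  intro n
  induction n with
  | zero =>
    intro u hu
    refine ⟨C (u.coeff 0 * e⁻¹), ?_⟩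
    rw [derivative_C, ← Polynomial.C_mul, zero_add]
    have : e * (u.coeff 0 * e⁻¹) = u.coeff 0 := by field_simp
    rw [this]
    exact (eq_C_of_natDegree_le_zero hu).symm
  | succ n ih =>
    intro u hu
    by_cases h0 : u.natDegree = 0
    · refine ⟨C (u.coeff 0 * e⁻¹), ?_⟩
      rw [derivative_C, ← Polynomial.C_mul, zero_add]
      have : e * (u.coeff 0 * e⁻¹) = u.coeff 0 := by field_simp
      rw [this]
      exact (eq_C_of_natDegree_le_zero (by omega)).symm
    · have hd : (derivative u).natDegree < u.natDegree := natDegree_derivative_lt h0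
      obtain ⟨h, hh⟩ := ih (C e⁻¹ * derivative u)
        (le_trans (Polynomial.natDegree_C_mul_le _ _) (by omega))
      refine ⟨C e⁻¹ * u - h, ?_⟩
      have hee : (C e : A) * C e⁻¹ = 1 := by
        rw [← Polynomial.C_mul, mul_inv_cancel₀ he, Polynomial.C_1]
      rw [derivative_sub, Polynomial.derivative_C_mul]
      linear_combination u * hee - hh

lemma LopMono (α β : A) (bt : B) (f : A) (j k : ℕ) :
    Lop K (C α * X + C β) bt (C (C f * X ^ j) * X ^ k)
      = C (C (derivative f + α * f * ((j : ℕ) : A)) * X ^ j) * X ^ k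
      + C (C (β * f * ((j : ℕ) : A)) * X ^ (j - 1)) * X ^ k
      + (C (bt * (C f * X ^ j)) * X ^ (k - 1)) * (((k : ℕ)) : T) := by
  unfold Lop
  rw [d1T, liftD_C_mul_X_pow, d1B, liftD_C_mul_X_pow, d2T, liftD_C_mul_X_pow]
  simp only [LinearMap.restrictScalars_apply, derivative_C_mul_X_pow]
  cases j with
  | zero =>
    cases k with
    | zero => simp [map_add, map_mul]
    | succ m =>
      simp only [Nat.cast_zero, mul_zero, map_zero, zero_mul, pow_zero, mul_one,
        Nat.add_sub_cancel, map_add, map_mul, map_pow, map_natCast]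
      push_cast
      ring
  | succ n =>
    cases k with
    | zero =>
      simp only [Nat.cast_zero, mul_zero, map_zero, zero_mul, pow_zero, mul_one,
        Nat.add_sub_cancel, map_add, map_mul, map_pow, map_natCast]
      push_cast
      ring
    | succ m =>
      simp only [Nat.add_sub_cancel, map_add, map_mul, map_pow, map_natCast]
      push_cast
      ring

theorem backward_core (c0 : K) (β : A) (bt : B) (M' : Submodule K T)
    (hmem : ∀ g : T, Lop K (C (C c0) * X + C β) bt g ∈ M') (g : T) : g ∈ M' := by
  have hode : ∀ (j : ℕ) (u : A), ∃ f : A, derivative f + C c0 * f * ((j : ℕ) : A) = u := by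
    intro j u
    obtain ⟨f, hf⟩ := ode K (c0 * (j : K)) u
    have hC : (C (c0 * (j : K)) : A) = C c0 * ((j : ℕ) : A) := by
      rw [map_mul, Polynomial.C_eq_natCast]
    exact ⟨f, by linear_combination hf - f * hC⟩
  have hmono : ∀ k : ℕ, (∀ k' < k, ∀ b : B, C b * X ^ k' ∈ M') →
      ∀ j : ℕ, ∀ u : A, C (C u * X ^ j) * X ^ k ∈ M' := by
    intro k hk j
    induction j using Nat.strong_induction_on with
    | _ j ihj =>
      intro u
      obtain ⟨f, hf⟩ := hode j u
      have hm := hmem (C (C f * X ^ j) * X ^ k)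
      rw [LopMono, hf] at hm
      have h2 : C (C (β * f * ((j : ℕ) : A)) * X ^ (j - 1)) * X ^ k ∈ M' := by
        cases j with
        | zero => simp only [Nat.cast_zero, mul_zero, map_zero, zero_mul]; exact M'.zero_mem
        | succ n => exact ihj n (by omega) _
      have h3 : (C (bt * (C f * X ^ j)) * X ^ (k - 1)) * (((k : ℕ)) : T) ∈ M' := by
        cases k with
        | zero => simp only [Nat.cast_zero, mul_zero]; exact M'.zero_mem
        | succ m =>
          have hb := hk m (by omega) (bt * (C f * X ^ j))
          have hrw : (C (bt * (C f * X ^ j)) * X ^ (m + 1 - 1)) * (((m + 1 : ℕ)) : T)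
              = (m + 1 : ℕ) • (C (bt * (C f * X ^ j)) * X ^ m) := by
            rw [nsmul_eq_mul, Nat.add_sub_cancel]; ring
          rw [hrw]
          exact nsmul_mem hb (m + 1)
      have hfinal : C (C u * X ^ j) * X ^ k
          = (C (C u * X ^ j) * X ^ k
              + C (C (β * f * ((j : ℕ) : A)) * X ^ (j - 1)) * X ^ k
              + (C (bt * (C f * X ^ j)) * X ^ (k - 1)) * (((k : ℕ)) : T))
            - C (C (β * f * ((j : ℕ) : A)) * X ^ (j - 1)) * X ^ k
            - (C (bt * (C f * X ^ j)) * X ^ (k - 1)) * (((k : ℕ)) : T) := by ring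
      rw [hfinal]
      have hsub : ∀ x y : T, x ∈ M' → y ∈ M' → x - y ∈ M' := by
        intro x y hx hy
        have := M'.add_mem hx (M'.smul_mem (-1 : K) hy)
        rw [Algebra.smul_def, map_neg, map_one] at this
        convert this using 1; ring
      exact hsub _ _ (hsub _ _ hm h2) h3
  have hall : ∀ k : ℕ, ∀ b : B, C b * X ^ k ∈ M' := by
    intro k
    induction k using Nat.strong_induction_on with
    | _ k ihk =>
      intro b
      induction b using Polynomial.induction_on' with
      | add p q hp hq => rw [map_add, add_mul]; exact M'.add_mem hp hq
      | monomial n a =>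
        rw [← Polynomial.C_mul_X_pow_eq_monomial]
        exact hmono k (fun k' hk' b => ihk k' hk' b) n a
  induction g using Polynomial.induction_on' with
  | add p q hp hq => exact M'.add_mem hp hq
  | monomial n b =>
    rw [← Polynomial.C_mul_X_pow_eq_monomial]
    exact hall n b

end main3

end S12

open MvPolynomial

/-- For `D = ∂_{x₁} + (a₂ x₂ + b₂) ∂_{x₂} + b₃ ∂_{x₃}` with
`a₂, b₂ ∈ K[x₁]` and `b₃ = Σ_{j=0}^{v} b₃⁽ʲ⁾ x₂^j` where each `b₃⁽ʲ⁾ ∈ K[x₁]` and the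
leading coefficient `b₃⁽ᵛ⁾` is a nonzero constant: `Im D` is a Mathieu–Zhao space of
`K[x₁, x₂, x₃]` iff `a₂` is a constant. -/
theorem statement12 (K : Type*) [Field K] [CharZero K]
    (a2 b2 b3 : MvPolynomial (Fin 3) K)
    (ha2 : a2 ∈ supported K ({0} : Set (Fin 3)))
    (hb2 : b2 ∈ supported K ({0} : Set (Fin 3)))
    (v : ℕ) (b3c : ℕ → MvPolynomial (Fin 3) K)
    (hb3c : ∀ j : ℕ, b3c j ∈ supported K ({0} : Set (Fin 3)))
    (hb3 : b3 = ∑ j ∈ Finset.range (v + 1), b3c j * X 1 ^ j)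
    (hb3v : ∃ c : K, c ≠ 0 ∧ b3c v = C c)
    (D : Derivation K (MvPolynomial (Fin 3) K) (MvPolynomial (Fin 3) K))
    (hD1 : D (X 0) = 1)
    (hD2 : D (X 1) = a2 * X 1 + b2)
    (hD3 : D (X 2) = b3) :
    IsMathieuZhao K (LinearMap.range D.toLinearMap) ↔ ∃ c : K, a2 = C c := by
  classical
  obtain ⟨c, hc, hb3cv⟩ := hb3v
  obtain ⟨α, hαa⟩ := S12.supported_char K ha2
  obtain ⟨β, hβb⟩ := S12.supported_char K hb2
  choose γ hγ using fun j => S12.supported_char K (hb3c j)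
  set bt : Polynomial (Polynomial K) :=
    ∑ j ∈ Finset.range (v + 1), Polynomial.C (γ j) * Polynomial.X ^ j with hbtdef
  have hγv : γ v = Polynomial.C c := by
    have h1 := hγ v
    rw [hb3cv, S12.φ_C] at h1
    exact (Polynomial.C_injective (Polynomial.C_injective h1)).symm
  have hφb3 : S12.φ K b3 = Polynomial.C bt := by
    rw [hb3, map_sum, hbtdef, map_sum]
    apply Finset.sum_congr rfl
    intro j hj
    rw [map_mul, map_pow, S12.φ_X1, hγ j, ← map_pow, ← map_mul]
  have hbtv : bt.coeff v = Polynomial.C c := by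
    rw [hbtdef, Polynomial.finset_sum_coeff]
    rw [Finset.sum_eq_single v]
    · rw [Polynomial.coeff_C_mul, Polynomial.coeff_X_pow, if_pos rfl, mul_one, hγv]
    · intro b hb hne
      rw [Polynomial.coeff_C_mul, Polynomial.coeff_X_pow, if_neg (fun h => hne h.symm),
        mul_zero]
    · intro h; exact absurd (Finset.self_mem_range_succ v) h
  have hbtle : bt.natDegree ≤ v := by
    apply Polynomial.natDegree_le_iff_coeff_eq_zero.2
    intro N hN
    rw [hbtdef, Polynomial.finset_sum_coeff]
    apply Finset.sum_eq_zero
    intro j hj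
    rw [Polynomial.coeff_C_mul, Polynomial.coeff_X_pow, if_neg, mul_zero]
    have := Finset.mem_range.1 hj
    omega
  have hv0 : v = 0 → bt = Polynomial.C (Polynomial.C c) := by
    intro hv
    subst hv
    rw [hbtdef, Finset.sum_range_one, pow_zero, mul_one, hγv]
  have htrans : ∀ f, S12.φ K (D f)
      = S12.Lop K (Polynomial.C α * Polynomial.X + Polynomial.C β) bt (S12.φ K f) :=
    S12.transport K a2 b2 b3 α β bt hαa hβb hφb3 D hD1 hD2 hD3
  constructor
  · intro hMZ
    by_contra hnc
    have hd : 1 ≤ α.natDegree := by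
      rcases Nat.eq_zero_or_pos α.natDegree with h0 | h1
      · exfalso
        obtain ⟨x, hx⟩ := Polynomial.natDegree_eq_zero.1 h0
        refine hnc ⟨x, ?_⟩
        apply (S12.φ K).injective
        rw [hαa, ← hx, S12.φ_C]
      · exact h1
    have h1M : (1 : MvPolynomial (Fin 3) K) ∈ LinearMap.range D.toLinearMap := ⟨X 0, hD1⟩
    obtain ⟨N, hN⟩ := hMZ 1 (X 1 ^ (v + 1)) (fun m _ => by simpa using h1M)
    have hmem := hN N le_rfl
    rw [one_pow, mul_one] at hmem
    obtain ⟨F, hF⟩ := hmem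
    refine S12.forward_core K α β hd bt v c hc hbtle hbtv hv0 (S12.φ K F) ?_
    rw [← htrans F]
    have hDF : D F = X 1 ^ (v + 1) := hF
    rw [hDF, map_pow, S12.φ_X1, ← map_pow]
  · rintro ⟨c0, hc0⟩
    have hα0 : α = Polynomial.C c0 := by
      have h1 := hαa
      rw [hc0, S12.φ_C] at h1
      exact Polynomial.C_injective (Polynomial.C_injective h1.symm)
    have hmem' : ∀ g, S12.Lop K (Polynomial.C (Polynomial.C c0) * Polynomial.X
        + Polynomial.C β) bt g
        ∈ (LinearMap.range D.toLinearMap).map (S12.φ K).toLinearMap := by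
      intro g
      apply Submodule.mem_map.2
      refine ⟨D ((S12.φ K).symm g), ⟨(S12.φ K).symm g, rfl⟩, ?_⟩
      show S12.φ K (D ((S12.φ K).symm g)) = _
      rw [htrans, AlgEquiv.apply_symm_apply, hα0]
    have hsurj := fun g => S12.backward_core K c0 β bt _ hmem' g
    have hMtop : LinearMap.range D.toLinearMap = ⊤ := by
      rw [Submodule.eq_top_iff']
      intro r
      obtain ⟨y, hy, hyr⟩ := Submodule.mem_map.1 (hsurj (S12.φ K r))
      have hyr' : y = r := (S12.φ K).injective hyr
      rwa [← hyr']
    intro a b _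
    exact ⟨1, fun m _ => by rw [hMtop]; trivial⟩
end

section
/- Let K be a field of characteristic zero and let n ≥ 2. If D is a locally nilpotent K-derivation of the polynomial ring K[x_1,…,x_n], then D is not a simple derivation. -/
open MvPolynomial

/-!
If `D` is simple, every nonzero `s ∈ ker D` generates a `D`-stable principal ideal, so it is a
unit, i.e. a constant. A nonzero locally nilpotent `D` has a local slice `t` (`D t ≠ 0`,
`D (D t) = 0`); as `D t` is then a unit, this gives a slice `p` with `D p = 1`. Modulo a slice,
every element is congruent to an element of `ker D = K`, so `p` divides both `X₀ - c₀` and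
`X₁ - c₁`. Viewed as a polynomial in `X₀`, `p` then has degree `0` and a unit coefficient, so `p`
is constant, contradicting `D p = 1`.
-/

namespace Derivation

section CommRing

variable {K R : Type*} [CommRing K] [CommRing R] [Algebra K R]

theorem IsSimple.isUnit_of_map_eq_zero {D : Derivation K R R} (hD : D.IsSimple) {s : R}
    (hs : D s = 0) (hs0 : s ≠ 0) : IsUnit s := by
  have hstable : ∀ a ∈ Ideal.span {s}, D a ∈ Ideal.span {s} := by
    intro a ha
    obtain ⟨t, rfl⟩ := Ideal.mem_span_singleton'.mp ha
    rw [leibniz, hs, smul_zero, zero_add, smul_eq_mul]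
    exact Ideal.mul_mem_right _ _ (Ideal.mem_span_singleton_self s)
  rcases hD _ hstable with h | h
  · exact absurd (Ideal.span_singleton_eq_bot.mp h) hs0
  · exact Ideal.span_singleton_eq_top.mp h

variable (D : Derivation K R R)

theorem exists_map_ne_zero_and_map_map_eq_zero {m : ℕ} {r : R} (hm : D^[m] r = 0)
    (hr : D r ≠ 0) : ∃ t, D t ≠ 0 ∧ D (D t) = 0 := by
  induction m generalizing r with
  | zero => exact absurd (by rw [show r = 0 from hm, map_zero]) hr
  | succ m ih =>
    by_cases hDr : D (D r) = 0
    · exact ⟨r, hr, hDr⟩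
    · exact ih hm hDr

theorem exists_map_eq_one (hnil : ∀ r, ∃ m, D^[m] r = 0)
    (hker : ∀ s, D s = 0 → s ≠ 0 → IsUnit s) {r : R} (hr : D r ≠ 0) : ∃ p, D p = 1 := by
  obtain ⟨m, hm⟩ := hnil r
  obtain ⟨t, ht, hDt⟩ := D.exists_map_ne_zero_and_map_map_eq_zero hm hr
  obtain ⟨u, hu⟩ := (hker _ hDt ht).exists_left_inv
  have hDu : D u = 0 := by rw [D.leibniz_of_mul_eq_one hu, hDt, smul_zero]
  exact ⟨u * t, by rw [leibniz, hDu, smul_zero, add_zero, smul_eq_mul, hu]⟩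

theorem iterate_map_mul_of_map_eq_one {p : R} (hp : D p = 1) (y : R) (k : ℕ) :
    D^[k + 1] (p * y) = p * D^[k + 1] y + (k + 1) • D^[k] y := by
  induction k with
  | zero => simp [leibniz, hp]
  | succ k ih =>
    rw [Function.iterate_succ_apply' _ (k + 1), ih, map_add, map_nsmul, leibniz, hp,
      ← Function.iterate_succ_apply' (⇑D) (k + 1), ← Function.iterate_succ_apply' (⇑D) k]
    simp only [smul_eq_mul, mul_one, succ_nsmul _ (k + 1)]
    ring

theorem iterate_map_smul (c : K) (x : R) (k : ℕ) : D^[k] (c • x) = c • D^[k] x := by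
  simpa only [Module.End.pow_apply, coeFn_coe] using ((D : R →ₗ[K] R) ^ k).map_smul c x

end CommRing

variable {K R : Type*} [Field K] [CharZero K] [CommRing R] [Algebra K R] (D : Derivation K R R)

theorem exists_eq_add_mul_of_map_eq_one {p : R} (hp : D p = 1) {m : ℕ} {r : R}
    (hm : D^[m] r = 0) : ∃ s g, D s = 0 ∧ r = s + p * g := by
  induction m generalizing r with
  | zero => exact ⟨0, 0, map_zero D, by simpa using hm⟩
  | succ m ih =>
    rcases m with _ | k
    · exact ⟨r, 0, hm, by ring⟩
    -- subtracting `p * D r / (k + 1)` lowers the nilpotency order of `r`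
    set c : K := ((k : K) + 1)⁻¹
    have hc : c * ((k : K) + 1) = 1 := inv_mul_cancel₀ (Nat.cast_add_one_ne_zero k)
    have hlower : D^[k + 1] (r - c • (p * D r)) = 0 := by
      rw [iterate_map_sub, iterate_map_smul, iterate_map_mul_of_map_eq_one D hp,
        ← Function.iterate_succ_apply, hm, mul_zero, zero_add, ← Nat.cast_smul_eq_nsmul K,
        smul_smul, Nat.cast_add_one, hc, one_smul, ← Function.iterate_succ_apply, sub_self]
    obtain ⟨s, g, hs, hrep⟩ := ih hlower
    refine ⟨s, g + c • D r, hs, ?_⟩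
    rw [mul_add, mul_smul_comm, ← add_assoc, ← hrep, sub_add_cancel]

end Derivation

namespace Polynomial

theorem isUnit_of_dvd_X_sub_C_of_dvd_C {S : Type*} [CommRing S] [IsDomain S] {p : S[X]}
    {a b : S} (hb : b ≠ 0) (ha : p ∣ X - C a) (hpb : p ∣ C b) : IsUnit p := by
  have hdeg : p.natDegree = 0 := by
    simpa using natDegree_le_of_dvd hpb (C_ne_zero.mpr hb)
  rw [eq_C_of_natDegree_eq_zero hdeg] at ha ⊢
  have hcoeff := (C_dvd_iff_dvd_coeff _ _).mp ha 1
  rw [coeff_sub, coeff_X_one, coeff_C, if_neg one_ne_zero, sub_zero] at hcoeff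
  exact isUnit_C.mpr (isUnit_of_dvd_one hcoeff)

end Polynomial

namespace MvPolynomial

theorem isUnit_of_dvd_X_sub_C_of_dvd_X_sub_C {R : Type*} [CommRing R] [IsDomain R] {n : ℕ}
    {p : MvPolynomial (Fin (n + 2)) R} {a b : R} (ha : p ∣ X 0 - C a) (hb : p ∣ X 1 - C b) :
    IsUnit p := by
  let φ := finSuccEquiv R (n + 1)
  have hφC (c : R) : φ (C c) = Polynomial.C (C c) := by
    rw [← algebraMap_eq, AlgEquiv.commutes, Polynomial.algebraMap_apply, algebraMap_eq]
  have ha' : φ p ∣ Polynomial.X - Polynomial.C (C a) := by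
    simpa only [map_sub, hφC, φ, finSuccEquiv_X_zero] using map_dvd φ ha
  have hb' : φ p ∣ Polynomial.C (X 0 - C b) := by
    simpa only [map_sub, hφC, φ, ← Fin.succ_zero_eq_one, finSuccEquiv_X_succ, Polynomial.C_sub]
      using map_dvd φ hb
  have hXb : (X 0 - C b : MvPolynomial (Fin (n + 1)) R) ≠ 0 := by
    refine sub_ne_zero.mpr fun h => ?_
    simpa [totalDegree_C, totalDegree_X] using congrArg totalDegree h
  simpa using (Polynomial.isUnit_of_dvd_X_sub_C_of_dvd_C hXb ha' hb').map φ.symm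

end MvPolynomial

/-- A locally nilpotent `K`-derivation of `K[x₁, …, xₙ]`, `n ≥ 2`,
is not simple. -/
theorem statement13 (K : Type*) [Field K] [CharZero K]
    (n : ℕ) (hn : 2 ≤ n)
    (D : Derivation K (MvPolynomial (Fin n) K) (MvPolynomial (Fin n) K))
    (hln : ∀ f : MvPolynomial (Fin n) K, ∃ m : ℕ, 0 < m ∧ (⇑D)^[m] f = 0) :
    ¬ Derivation.IsSimple D := by
  intro hsimp
  obtain ⟨n, rfl⟩ : ∃ k, n = k + 2 := ⟨n - 2, by omega⟩
  have hnil : ∀ r, ∃ m, D^[m] r = 0 := fun r => (hln r).imp fun _ h => h.2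
  have hker : ∀ s, D s = 0 → s ≠ 0 → IsUnit s := fun _ => hsimp.isUnit_of_map_eq_zero
  have hker_const : ∀ s, D s = 0 → ∃ c, s = C c := by
    intro s hs
    by_cases hs0 : s = 0
    · exact ⟨0, by rw [hs0, C_0]⟩
    · obtain ⟨c, -, rfl⟩ := isUnit_iff_eq_C_of_isReduced.mp (hker s hs hs0)
      exact ⟨c, rfl⟩
  obtain ⟨r, hr⟩ : ∃ r, D r ≠ 0 := by
    by_contra! h
    exact X_prime.not_isUnit (hker (X 0) (h _) (X_ne_zero 0))
  obtain ⟨p, hp⟩ := D.exists_map_eq_one hnil hker hr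
  have hdvd : ∀ i, ∃ c, p ∣ X i - C c := by
    intro i
    obtain ⟨m, hm⟩ := hnil (X i)
    obtain ⟨s, g, hs, hXi⟩ := D.exists_eq_add_mul_of_map_eq_one hp hm
    obtain ⟨c, rfl⟩ := hker_const s hs
    exact ⟨c, g, by rw [hXi, add_sub_cancel_left]⟩
  obtain ⟨c₀, h₀⟩ := hdvd 0
  obtain ⟨c₁, h₁⟩ := hdvd 1
  obtain ⟨c, -, rfl⟩ :=
    isUnit_iff_eq_C_of_isReduced.mp (isUnit_of_dvd_X_sub_C_of_dvd_X_sub_C h₀ h₁)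
  rw [← algebraMap_eq, D.map_algebraMap] at hp
  exact zero_ne_one hp
end
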